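/- arXiv:1511.08056 — 5 statements merged into one kernel-verified Lean document; each statement's English description precedes it below -/
import Mathlib

section
/- Let N be a proper binary level-1 phylogenetic network on n ≥ 3 leaves with vertex set V, arc set A, and g ≥ 1 galls. Then |V| = 2n − 1 + 2g and |A| = 2n + 3g − 2; consequently 2n+1 ≤ |V| and 2n+1 ≤ |A|. -/
open Relation

noncomputable section

/-- The interior vertices of a path represented as the list of its vertices. -/
def listInterior {α : Type*} (p : List α) : List α := p.tail.dropLast

/-- A (candidate) phylogenetic network: a finite directed graph together with an
injective labelling of a set `X` into its vertices (the leaves). -/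
structure Net (X : Type) : Type 1 where
  V : Type
  finV : Finite V
  arc : V → V → Prop
  leaf : X → V
  leaf_inj : Function.Injective leaf

attribute [instance] Net.finV

namespace Net

variable {X : Type} (N : Net X)

def outdeg (v : N.V) : ℕ := {w | N.arc v w}.ncard
def indeg (v : N.V) : ℕ := {u | N.arc u v}.ncard
def IsLeaf (v : N.V) : Prop := ∃ x, N.leaf x = v
def IsHybrid (v : N.V) : Prop := 2 ≤ N.indeg v

/-- The axioms of a rooted phylogenetic network on `X`: acyclic, the leaves are exactly
the vertices of out-degree 0 (and have in-degree one), there is a root of in-degree 0 and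
out-degree at least 2 from which every vertex is reachable, and every non-root interior
vertex is either a split vertex or a hybrid vertex. -/
def IsPhylo : Prop :=
  (∀ v, ¬ TransGen N.arc v v) ∧
  (∀ v, N.outdeg v = 0 ↔ N.IsLeaf v) ∧
  (∀ x, N.indeg (N.leaf x) = 1) ∧
  (∃ ρ, N.indeg ρ = 0 ∧ 2 ≤ N.outdeg ρ ∧ ∀ v, ReflTransGen N.arc ρ v) ∧
  (∀ v, ¬ N.IsLeaf v →
    N.indeg v = 0 ∨ (N.indeg v = 1 ∧ 2 ≤ N.outdeg v) ∨ (2 ≤ N.indeg v ∧ 1 ≤ N.outdeg v))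

/-- A binary phylogenetic network: the root and split vertices have out-degree 2,
hybrid vertices have in-degree 2 and out-degree 1. -/
def IsBinary : Prop :=
  N.IsPhylo ∧
  ∀ v, N.IsLeaf v ∨ (N.indeg v ≤ 1 ∧ N.outdeg v = 2) ∨ (N.indeg v = 2 ∧ N.outdeg v = 1)

/-- The underlying undirected graph. -/
def ugraph : SimpleGraph N.V where
  Adj v w := v ≠ w ∧ (N.arc v w ∨ N.arc w v)
  symm := ⟨fun _ _ h => ⟨Ne.symm h.1, h.2.symm⟩⟩
  loopless := ⟨fun _ h => h.1 rfl⟩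

/-- A binary level-1 network: binary, every cycle of the underlying graph has at least
4 vertices, and every cycle of the underlying graph contains at most one hybrid vertex
(equivalently, every biconnected component contains at most one hybrid vertex). -/
def IsLevel1 : Prop :=
  N.IsBinary ∧
  (∀ (c : N.V) (p : N.ugraph.Walk c c), p.IsCycle → 4 ≤ p.length) ∧
  (∀ (c : N.V) (p : N.ugraph.Walk c c), p.IsCycle →
    ∀ v ∈ p.support, ∀ w ∈ p.support, N.IsHybrid v → N.IsHybrid w → v = w)

/-- The number of galls of a binary level-1 network (each gall contains exactly one
hybrid vertex, and conversely). -/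
def gallCount : ℕ := {v : N.V | N.IsHybrid v}.ncard

def numVertices : ℕ := Nat.card N.V
def numArcs : ℕ := {p : N.V × N.V | N.arc p.1 p.2}.ncard

/-- An arc whose deletion disconnects the underlying graph. -/
def CutArc (u v : N.V) : Prop :=
  N.arc u v ∧ ¬ (N.ugraph.deleteEdges {s(u, v)}).Connected

/-- The number `c_N` of non-trivial cut arcs (cut arcs whose head is not a leaf). -/
def numNontrivialCutArcs : ℕ :=
  {p : N.V × N.V | N.CutArc p.1 p.2 ∧ ¬ N.IsLeaf p.2}.ncard

/-- The cluster of a vertex: the set of leaf labels below or equal to it. -/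
def cluster (v : N.V) : Set X := {x | ReflTransGen N.arc v (N.leaf x)}

/-- The hardwired cluster system. -/
def clusterSystem : Set (Set X) := {C | ∃ v, C = N.cluster v}

/-- A network whose every vertex has in-degree at most 1 is a tree. -/
def IsTree : Prop := ∀ v, N.indeg v ≤ 1

/-- A directed path from `u` to `v`, given as the list of all its vertices. -/
def IsDiPath (p : List N.V) (u v : N.V) : Prop :=
  p.Chain' N.arc ∧ p.head? = some u ∧ p.getLast? = some v ∧ p.Nodup

/-- `N` displays `T`: a subgraph of `N` is a subdivision of `T`, i.e. there is an
injection of the vertices of `T` into those of `N`, fixing the leaf labels, together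
with internally disjoint directed paths realizing the arcs of `T`. -/
def Displays (T : Net X) : Prop :=
  ∃ (φ : T.V → N.V) (P : T.V → T.V → List N.V),
    Function.Injective φ ∧
    (∀ x, φ (T.leaf x) = N.leaf x) ∧
    (∀ u v, T.arc u v → N.IsDiPath (P u v) (φ u) (φ v)) ∧
    (∀ u v, T.arc u v → ∀ w ∈ listInterior (P u v), ∀ z, φ z ≠ w) ∧
    (∀ u v u' v', T.arc u v → T.arc u' v' → (u, v) ≠ (u', v') →
      ∀ w ∈ listInterior (P u v), w ∉ listInterior (P u' v'))

/-- The softwired cluster system: all clusters of phylogenetic trees on `X`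
displayed by `N`. -/
def softwired : Set (Set X) :=
  {C | ∃ T : Net X, T.IsPhylo ∧ T.IsTree ∧ N.Displays T ∧ C ∈ T.clusterSystem}

/-- The triplet `ab|c` is consistent with `N`. -/
def Consistent (a b c : X) : Prop :=
  a ≠ b ∧ a ≠ c ∧ b ≠ c ∧
  ∃ v w : N.V, v ≠ w ∧ ∃ p₁ p₂ p₃ p₄ : List N.V,
    N.IsDiPath p₁ v (N.leaf c) ∧ N.IsDiPath p₂ v w ∧
    N.IsDiPath p₃ w (N.leaf a) ∧ N.IsDiPath p₄ w (N.leaf b) ∧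
    [p₁, p₂, p₃, p₄].Pairwise (fun p q => ∀ x ∈ listInterior p, x ∉ listInterior q)

/-- The triplet system `R(N)` induced by `N`; the triplet `ab|c` is represented
by the pair `(s(a,b), c)`. -/
def tripletSet : Set (Sym2 X × X) :=
  {t | ∃ a b : X, t.1 = s(a, b) ∧ N.Consistent a b t.2}

/-- Equivalence of networks: an isomorphism of directed graphs fixing leaf labels. -/
def Equiv (N' : Net X) : Prop :=
  ∃ e : N.V ≃ N'.V, (∀ u v, N.arc u v ↔ N'.arc (e u) (e v)) ∧
    ∀ x, e (N.leaf x) = N'.leaf x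

/-- A vertex lying on some cycle of the underlying graph (i.e. on a gall). -/
def OnGall (v : N.V) : Prop :=
  ∃ (c : N.V) (p : N.ugraph.Walk c c), p.IsCycle ∧ v ∈ p.support

/-- A simple level-1 network: exactly one gall, and every leaf is adjacent to a
vertex of that gall. -/
def IsSimple : Prop :=
  N.gallCount = 1 ∧ ∀ (x : X) (u : N.V), N.arc u (N.leaf x) → N.OnGall u

/-- 4-outwards: the underlying graph has no cycle of length four or less. -/
def FourOutwards : Prop :=
  ∀ (c : N.V) (p : N.ugraph.Walk c c), p.IsCycle → 5 ≤ p.length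

/-- Saturated: no vertex is incident with more than one cut arc. -/
def IsSaturated : Prop :=
  ∀ v : N.V, {p : N.V × N.V | N.CutArc p.1 p.2 ∧ (p.1 = v ∨ p.2 = v)}.ncard ≤ 1

/-- A highest cut arc: no cut arc lies above it. -/
def HighestCutArc (u v : N.V) : Prop :=
  N.CutArc u v ∧ ¬ ∃ u' v', N.CutArc u' v' ∧ ReflTransGen N.arc v' u

/-- The partition `Cut(N)` of `X` induced by the highest cut arcs. -/
def cutPartition : Set (Set X) :=
  {C | ∃ u v, N.HighestCutArc u v ∧ C = N.cluster v}

/-- `S` is an SN-set of `R(N)`: there is no triplet `xy|z ∈ R(N)` with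
`x, z ∈ S` and `y ∉ S`. -/
def IsSNSet (S : Set X) : Prop :=
  ∀ a b c : X, N.Consistent a b c → a ∈ S → c ∈ S → b ∈ S

/-- A maximal SN-set: a non-trivial SN-set not strictly contained in any
non-trivial SN-set. -/
def IsMaximalSNSet (S : Set X) : Prop :=
  N.IsSNSet S ∧ S ≠ Set.univ ∧
  ∀ S' : Set X, N.IsSNSet S' → S' ≠ Set.univ → S ⊆ S' → S = S'

/-- Every gall (cycle of the underlying graph) has exactly three outgoing arcs. -/
def EveryGallThreeOutgoing : Prop :=
  ∀ (c : N.V) (p : N.ugraph.Walk c c), p.IsCycle →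
    {q : N.V × N.V | N.arc q.1 q.2 ∧ q.1 ∈ p.support ∧ q.2 ∉ p.support}.ncard = 3

end Net

end

/-! In a binary network every vertex has (in-degree, out-degree) equal to `(1, 0)` (the `n`
leaves), `(0, 2)` (the root), `(1, 2)` (the `s` split vertices) or `(2, 1)` (the `g` hybrids).
Counting arcs by heads and by tails gives `n + s + 2g = 2 + 2s + g`, so `s = n + g - 2`; then
`|V| = n + 1 + s + g` and `|A| = n + s + 2g`. -/

open Finset

lemma Set.ncard_setOf_eq_card_filter {α : Type*} [Fintype α] (p : α → Prop) [DecidablePred p] :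
    {x | p x}.ncard = #{x | p x} := by
  rw [Set.ncard_eq_toFinset_card', Set.toFinset_ofPred]

namespace Net

variable {X : Type} {N : Net X}

noncomputable def degrees (N : Net X) (v : N.V) : ℕ × ℕ := (N.indeg v, N.outdeg v)

theorem ncard_isLeaf : {v | N.IsLeaf v}.ncard = Nat.card X := by
  rw [← Nat.card_coe_set_eq]
  exact Nat.card_range_of_injective N.leaf_inj

theorem IsPhylo.existsUnique_indeg_eq_zero (hN : N.IsPhylo) : ∃! ρ, N.indeg ρ = 0 := by
  obtain ⟨-, -, -, ⟨ρ, hρ, -, hreach⟩, -⟩ := hN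
  refine ⟨ρ, hρ, fun v hv => ?_⟩
  rcases (hreach v).cases_tail with rfl | ⟨u, -, huv⟩
  · rfl
  · have : 0 < N.indeg v := (Set.ncard_pos (Set.toFinite _)).mpr ⟨u, huv⟩
    omega

theorem IsPhylo.degrees_eq_one_zero_iff (hN : N.IsPhylo) {v : N.V} :
    N.degrees v = (1, 0) ↔ N.IsLeaf v := by
  obtain ⟨-, hleaf, hleafin, -, -⟩ := hN
  refine ⟨fun h => (hleaf v).1 (congrArg Prod.snd h), ?_⟩
  rintro ⟨x, rfl⟩
  simp [degrees, hleafin x, (hleaf _).2 ⟨x, rfl⟩]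

theorem IsBinary.degrees_mem (hN : N.IsBinary) (v : N.V) :
    N.degrees v ∈ ({(1, 0), (0, 2), (1, 2), (2, 1)} : Finset (ℕ × ℕ)) := by
  rcases hN.2 v with hv | ⟨hin, hout⟩ | ⟨hin, hout⟩
  · simp [(hN.1.degrees_eq_one_zero_iff).2 hv]
  · interval_cases h : N.indeg v <;> simp [degrees, h, hout]
  · simp [degrees, hin, hout]

theorem IsBinary.degrees_eq_zero_two_iff (hN : N.IsBinary) {v : N.V} :
    N.degrees v = (0, 2) ↔ N.indeg v = 0 := by
  have := hN.degrees_mem v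
  simp only [degrees, mem_insert, mem_singleton, Prod.ext_iff] at this ⊢
  omega

theorem IsBinary.degrees_eq_two_one_iff (hN : N.IsBinary) {v : N.V} :
    N.degrees v = (2, 1) ↔ N.IsHybrid v := by
  have := hN.degrees_mem v
  simp only [IsHybrid, degrees, mem_insert, mem_singleton, Prod.ext_iff] at this ⊢
  omega

section Counting

open scoped Classical

variable [Fintype N.V]

theorem sum_outdeg_eq_numArcs : ∑ v, N.outdeg v = N.numArcs := by
  simp only [outdeg, numArcs, Set.ncard_setOf_eq_card_filter, card_filter, Fintype.sum_prod_type]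

theorem sum_indeg_eq_numArcs : ∑ v, N.indeg v = N.numArcs := by
  simp only [indeg, numArcs, Set.ncard_setOf_eq_card_filter, card_filter, Fintype.sum_prod_type]
  exact sum_comm

theorem IsBinary.sum_comp_degrees {M : Type*} [AddCommMonoid M] (hN : N.IsBinary)
    (F : ℕ × ℕ → M) :
    ∑ v, F (N.degrees v) =
      #{v | N.degrees v = (1, 0)} • F (1, 0) + #{v | N.degrees v = (0, 2)} • F (0, 2) +
        #{v | N.degrees v = (1, 2)} • F (1, 2) + #{v | N.degrees v = (2, 1)} • F (2, 1) := by
  rw [← sum_fiberwise_of_maps_to' (fun v _ => hN.degrees_mem v)]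
  simp [add_assoc]

theorem IsBinary.card_degrees_eq_one_zero (hN : N.IsBinary) :
    #{v | N.degrees v = (1, 0)} = Nat.card X := by
  simp_rw [hN.1.degrees_eq_one_zero_iff]
  rw [← Set.ncard_setOf_eq_card_filter, ncard_isLeaf]

theorem IsBinary.card_degrees_eq_zero_two (hN : N.IsBinary) :
    #{v | N.degrees v = (0, 2)} = 1 := by
  obtain ⟨ρ, hρ, huniq⟩ := hN.1.existsUnique_indeg_eq_zero
  simp_rw [hN.degrees_eq_zero_two_iff, card_eq_one]
  exact ⟨ρ, by ext v; simpa using ⟨huniq v, fun h => h ▸ hρ⟩⟩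

theorem IsBinary.card_degrees_eq_two_one (hN : N.IsBinary) :
    #{v | N.degrees v = (2, 1)} = N.gallCount := by
  simp_rw [hN.degrees_eq_two_one_iff]
  rw [gallCount, Set.ncard_setOf_eq_card_filter]

theorem IsBinary.card_degrees_eq_one_two (hN : N.IsBinary) :
    #{v | N.degrees v = (1, 2)} + 2 = Nat.card X + N.gallCount := by
  have hin : ∑ v, N.indeg v = _ := hN.sum_comp_degrees Prod.fst
  have hout : ∑ v, N.outdeg v = _ := hN.sum_comp_degrees Prod.snd
  rw [hN.card_degrees_eq_one_zero, hN.card_degrees_eq_zero_two, hN.card_degrees_eq_two_one]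
    at hin hout
  simp only [sum_indeg_eq_numArcs, sum_outdeg_eq_numArcs, smul_eq_mul] at hin hout
  omega

end Counting

theorem IsBinary.numVertices_eq (hN : N.IsBinary) :
    (N.numVertices : ℤ) = 2 * Nat.card X - 1 + 2 * N.gallCount := by
  classical
  cases nonempty_fintype N.V
  have hV : ∑ _v : N.V, 1 = _ := hN.sum_comp_degrees fun _ => 1
  rw [hN.card_degrees_eq_one_zero, hN.card_degrees_eq_zero_two, hN.card_degrees_eq_two_one]
    at hV
  have hsplit := hN.card_degrees_eq_one_two
  rw [numVertices, Nat.card_eq_fintype_card, ← card_univ, card_eq_sum_ones, hV]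
  simp only [smul_eq_mul, mul_one]
  omega

theorem IsBinary.numArcs_eq (hN : N.IsBinary) :
    (N.numArcs : ℤ) = 2 * Nat.card X + 3 * N.gallCount - 2 := by
  classical
  cases nonempty_fintype N.V
  have hin : ∑ v, N.indeg v = _ := hN.sum_comp_degrees Prod.fst
  rw [hN.card_degrees_eq_one_zero, hN.card_degrees_eq_zero_two, hN.card_degrees_eq_two_one,
    sum_indeg_eq_numArcs] at hin
  have hsplit := hN.card_degrees_eq_one_two
  simp only [smul_eq_mul] at hin
  omega

end Net

theorem stmt1_general {X : Type} (N : Net X)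
    (hlev : N.IsLevel1) (hproper : 1 ≤ N.gallCount) :
    (N.numVertices : ℤ) = 2 * (Nat.card X : ℤ) - 1 + 2 * (N.gallCount : ℤ) ∧
    (N.numArcs : ℤ) = 2 * (Nat.card X : ℤ) + 3 * (N.gallCount : ℤ) - 2 ∧
    2 * (Nat.card X : ℤ) + 1 ≤ (N.numVertices : ℤ) ∧
    2 * (Nat.card X : ℤ) + 1 ≤ (N.numArcs : ℤ) := by
  have hV := hlev.1.numVertices_eq
  have hA := hlev.1.numArcs_eq
  refine ⟨hV, hA, ?_, ?_⟩ <;> omega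

/-- a proper binary level-1 network on `n ≥ 3` leaves with `g ≥ 1` galls
has `2n - 1 + 2g` vertices and `2n + 3g - 2` arcs; consequently `2n+1 ≤ |V|` and
`2n+1 ≤ |A|`. -/
theorem stmt1 {X : Type} (N : Net X) (hn : 3 ≤ Nat.card X)
    (hlev : N.IsLevel1) (hproper : 1 ≤ N.gallCount) :
    (N.numVertices : ℤ) = 2 * (Nat.card X : ℤ) - 1 + 2 * (N.gallCount : ℤ) ∧
    (N.numArcs : ℤ) = 2 * (Nat.card X : ℤ) + 3 * (N.gallCount : ℤ) - 2 ∧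
    2 * (Nat.card X : ℤ) + 1 ≤ (N.numVertices : ℤ) ∧
    2 * (Nat.card X : ℤ) + 1 ≤ (N.numArcs : ℤ) :=
  stmt1_general N hlev hproper
end

section
/- Let N be a binary phylogenetic network on X and let (u,v) be a cut arc of N. Then the cluster C_N(v) is an SN-set of the triplet system R(N); that is, there is no triplet xy|z ∈ R(N) with x, z ∈ C_N(v) and y ∉ C_N(v). -/
open Relation

/-!
Deleting the cut arc `(u, v)` disconnects `u` from `v` in the underlying graph. The component
of `v` is closed under arcs and, since every vertex lies below the root and the root lies on the
side of `u`, it consists exactly of the descendants of `v`; so `(u, v)` is the only arc entering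
the descendants of `v`. Now let `ab|c` be witnessed by `v', w` and disjoint paths, with `a, c`
below `v` and `b` not. Then `w` and `v'` are not below `v`, so the paths from `v'` to `c` and from
`w` to `a` both enter the descendants of `v`, hence both pass through `v`. As leaves have no
outgoing arcs, `v` is an interior vertex of both paths, contradicting their disjointness.
-/

namespace Relation

variable {α : Type*} {r : α → α → Prop} {A : Set α} {s t v : α}

theorem ReflTransGen.mem_of_closed (hA : ∀ a b, r a b → a ∈ A → b ∈ A)
    (h : ReflTransGen r s t) (hs : s ∈ A) : t ∈ A := by
  induction h with
  | refl => exact hs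
  | tail _ hbc ih => exact hA _ _ hbc ih

theorem ReflTransGen.of_sole_entry (hentry : ∀ a b, r a b → a ∉ A → b ∈ A → b = v)
    (h : ReflTransGen r s t) (hs : s ∉ A) (ht : t ∈ A) : ReflTransGen r v t := by
  induction h using ReflTransGen.head_induction_on with
  | refl => exact absurd ht hs
  | @head a c hac hct ih =>
    by_cases hc : c ∈ A
    · exact hentry a c hac hs hc ▸ hct
    · exact ih hc

end Relation

namespace List

variable {α : Type*} {r : α → α → Prop} {A : Set α} {p : List α} {s t v z : α}

theorem IsChain.mem_of_sole_entry (hp : p.IsChain r)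
    (hentry : ∀ a b, r a b → a ∉ A → b ∈ A → b = v)
    (hs : p.head? = some s) (ht : p.getLast? = some t) (hsA : s ∉ A) (htA : t ∈ A) : v ∈ p := by
  induction p generalizing s with
  | nil => simp at hs
  | cons x l ih =>
    obtain rfl : x = s := by simpa using hs
    cases l with
    | nil =>
      obtain rfl : x = t := by simpa using ht
      exact absurd htA hsA
    | cons y m =>
      rw [isChain_cons_cons] at hp
      by_cases hy : y ∈ A
      · simp [hentry x y hp.1 hsA hy]
      · exact mem_cons_of_mem _ (ih hp.2 rfl (by simpa using ht) hy)

theorem IsChain.exists_rel_of_ne_getLast (hp : p.IsChain r) (ht : p.getLast? = some t)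
    (hz : z ∈ p) (hzt : z ≠ t) : ∃ y, r z y := by
  induction p with
  | nil => simp at hz
  | cons x l ih =>
    cases l with
    | nil => simp_all
    | cons y m =>
      rw [isChain_cons_cons] at hp
      rcases mem_cons.mp hz with rfl | hz
      · exact ⟨y, hp.1⟩
      · exact ih hp.2 (by simpa using ht) hz

end List

theorem mem_listInterior_of_ne {α : Type*} {p : List α} {s t z : α} (hs : p.head? = some s)
    (ht : p.getLast? = some t) (hz : z ∈ p) (hzs : z ≠ s) (hzt : z ≠ t) :
    z ∈ listInterior p := by
  cases p with
  | nil => simp at hz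
  | cons x l =>
    obtain rfl : x = s := by simpa using hs
    have hzl : z ∈ l := (List.mem_cons.mp hz).resolve_left hzs
    have hlt : l.getLast? = some t := by
      obtain ⟨y, m, rfl⟩ := List.exists_cons_of_ne_nil (List.ne_nil_of_mem hzl)
      rwa [List.getLast?_cons_cons] at ht
    exact List.mem_dropLast_of_mem_of_ne_getLast? hzl (by simpa [hlt] using hzt)

namespace Net

variable {X : Type} {N : Net X} {u v a b : N.V}

def descendants (v : N.V) : Set N.V := {w | ReflTransGen N.arc v w}

theorem IsDiPath.reflTransGen {p : List N.V} (h : N.IsDiPath p a b) :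
    ReflTransGen N.arc a b := by
  obtain ⟨hc, hs, ht, -⟩ := h
  cases p with
  | nil => simp at hs
  | cons x l =>
    obtain rfl : x = a := by simpa using hs
    exact List.relationReflTransGen_of_exists_isChain_cons l hc
      (Option.some.inj ((List.getLast?_eq_some_getLast _).symm.trans ht))

theorem IsPhylo.not_arc_leaf (hN : N.IsPhylo) (x : X) (y : N.V) : ¬ N.arc (N.leaf x) y := by
  have h0 : N.outdeg (N.leaf x) = 0 := (hN.2.1 _).2 ⟨x, rfl⟩
  rw [outdeg, Set.ncard_eq_zero] at h0
  exact fun h => h0.subset h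

theorem ugraph_reachable_of_arc (h : N.arc a b) : N.ugraph.Reachable a b := by
  by_cases hab : a = b
  · exact hab ▸ .refl a
  · exact SimpleGraph.Adj.reachable ⟨hab, .inl h⟩

theorem reachable_deleteEdges_of_arc (h : N.arc a b) (he : s(a, b) ≠ s(u, v)) :
    (N.ugraph.deleteEdges {s(u, v)}).Reachable a b := by
  by_cases hab : a = b
  · exact hab ▸ .refl a
  · exact SimpleGraph.Adj.reachable ((SimpleGraph.deleteEdges_adj ..).2 ⟨⟨hab, .inl h⟩, he⟩)

theorem IsPhylo.ugraph_connected (hN : N.IsPhylo) : N.ugraph.Connected := by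
  obtain ⟨ρ, -, -, hρ⟩ := hN.2.2.2.1
  refine (SimpleGraph.connected_iff_exists_forall_reachable _).2 ⟨ρ, fun t => ?_⟩
  exact reflTransGen_le_of_equivalence_of_le N.ugraph.reachable_is_equivalence
    (fun _ _ => ugraph_reachable_of_arc) _ _ (hρ t)

theorem IsPhylo.not_reachable_of_cutArc (hN : N.IsPhylo) (hcut : N.CutArc u v) :
    ¬ (N.ugraph.deleteEdges {s(u, v)}).Reachable u v :=
  not_not.mp (mt hN.ugraph_connected.connected_delete_edge_of_not_isBridge hcut.2)

theorem CutArc.eq_of_arc_into_descendants (hcut : N.CutArc u v) (hN : N.IsPhylo)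
    (hab : N.arc a b) (ha : a ∉ N.descendants v) (hb : b ∈ N.descendants v) : b = v := by
  set G := N.ugraph.deleteEdges {s(u, v)}
  set A : Set N.V := {t | G.Reachable v t}
  have hu : u ∉ A := fun h => hN.not_reachable_of_cutArc hcut h.symm
  obtain ⟨hacyc, -, -, ⟨ρ, -, -, hρ⟩, -⟩ := hN
  have closed : ∀ a b, N.arc a b → a ∈ A → b ∈ A := by
    intro a b hab ha
    by_cases he : s(a, b) = s(u, v)
    · rcases Sym2.eq_iff.mp he with ⟨-, rfl⟩ | ⟨rfl, rfl⟩
      · exact .refl b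
      · exact absurd (TransGen.head hcut.1 (.single hab)) (hacyc _)
    · exact ha.trans (reachable_deleteEdges_of_arc hab he)
  have entry : ∀ a b, N.arc a b → a ∉ A → b ∈ A → b = v := by
    intro a b hab ha hb
    by_cases he : s(a, b) = s(u, v)
    · rcases Sym2.eq_iff.mp he with ⟨-, rfl⟩ | ⟨rfl, -⟩
      · rfl
      · exact absurd (.refl a) ha
    · exact absurd (hb.trans (reachable_deleteEdges_of_arc hab he).symm) ha
  have hρA : ρ ∉ A := fun h => hu ((hρ u).mem_of_closed closed h)
  have hA : A = N.descendants v := Set.ext fun t =>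
    ⟨(hρ t).of_sole_entry entry hρA, fun ht => ht.mem_of_closed closed (.refl v)⟩
  exact entry a b hab (hA ▸ ha) (hA ▸ hb)

theorem isSNSet_cluster_of_sole_entry (hleaf : ∀ x y, ¬ N.arc (N.leaf x) y)
    (hentry : ∀ a b, N.arc a b → a ∉ N.descendants v → b ∈ N.descendants v → b = v) :
    N.IsSNSet (N.cluster v) := by
  rintro a b c ⟨-, hac, -, v', w, -, p₁, p₂, p₃, p₄, h₁, h₂, h₃, h₄, hdisj⟩ ha hc
  by_contra hb
  have hw : w ∉ N.descendants v := fun h => hb (ReflTransGen.trans h h₄.reflTransGen)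
  have hv' : v' ∉ N.descendants v := fun h => hw (ReflTransGen.trans h h₂.reflTransGen)
  obtain ⟨hchain₁, hs₁, ht₁, -⟩ := h₁
  obtain ⟨hchain₃, hs₃, ht₃, -⟩ := h₃
  have hv₁ : v ∈ p₁ := hchain₁.mem_of_sole_entry hentry hs₁ ht₁ hv' hc
  have hv₃ : v ∈ p₃ := hchain₃.mem_of_sole_entry hentry hs₃ ht₃ hw ha
  have hac' : N.leaf a ≠ N.leaf c := N.leaf_inj.ne hac
  have hvc : v ≠ N.leaf c := by
    rintro rfl
    obtain ⟨y, hy⟩ := hchain₃.exists_rel_of_ne_getLast ht₃ hv₃ hac'.symm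
    exact hleaf c y hy
  have hva : v ≠ N.leaf a := by
    rintro rfl
    obtain ⟨y, hy⟩ := hchain₁.exists_rel_of_ne_getLast ht₁ hv₁ hac'
    exact hleaf a y hy
  have hvv' : v ≠ v' := fun h => hv' (h ▸ .refl)
  have hvw : v ≠ w := fun h => hw (h ▸ .refl)
  exact (List.pairwise_cons.mp hdisj).1 p₃ (by simp) v
    (mem_listInterior_of_ne hs₁ ht₁ hv₁ hvv' hvc) (mem_listInterior_of_ne hs₃ ht₃ hv₃ hvw hva)

end Net

/-- if `(u,v)` is a cut arc of a binary phylogenetic network `N`, then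
the cluster `C_N(v)` is an SN-set of `R(N)`. -/
theorem stmt9 {X : Type} (N : Net X) (hbin : N.IsBinary)
    (u v : N.V) (hcut : N.CutArc u v) :
    N.IsSNSet (N.cluster v) :=
  Net.isSNSet_cluster_of_sole_entry hbin.1.not_arc_leaf
    fun _ _ => hcut.eq_of_arc_into_descendants hbin.1
end

section
/- Let N and N' be binary level-1 networks on the same leaf set of size n ≥ 3 such that R(N) ⊆ R(N'). Let v be a split vertex of N that is the head of a cut arc of N, and v' a split vertex of N' that is the head of a cut arc of N'. Then the clusters C_N(v) and C_{N'}(v') are compatible, i.e. their intersection is empty or equals one of the two. -/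
open Relation

/-!
Suppose the clusters of `v` and `v'` overlap without being nested, and pick `a` below both,
`b` below `v` only and `c` below `v'` only. Branching at a lowest common ancestor of `a` and
`b` below `v`, and then at a lowest common ancestor of that vertex and `c`, exhibits `ab|c` as
a triplet of `N`, hence of `N'`. In `N'`, however, every directed path entering the cluster of
the cut-arc head `v'` from outside passes through `v'`; so the paths to `a` and to `c` in a
witness of `ab|c` would share the interior vertex `v'`.
-/

open Relation

section Lists

variable {α : Type*} {r : α → α → Prop} {l : List α} {s t z : α}

lemma List.IsChain.pairwise_transGen (hl : l.IsChain r) : l.Pairwise (TransGen r) :=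
  List.isChain_iff_pairwise.1 (hl.imp fun _ _ => TransGen.single)

lemma List.IsChain.nodup_of_acyclic (hac : ∀ x, ¬ TransGen r x x) (hl : l.IsChain r) :
    l.Nodup := by
  refine hl.pairwise_transGen.imp ?_
  rintro x _ hxy rfl
  exact hac x hxy

lemma List.eq_cons_listInterior_append (hs : l.head? = some s) (ht : l.getLast? = some t)
    (hl : 2 ≤ l.length) : l = s :: (listInterior l ++ [t]) := by
  obtain _ | ⟨a, _ | ⟨b, m⟩⟩ := l
  · simp at hl
  · simp at hl
  · simp only [head?_cons, Option.some.injEq] at hs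
    rw [getLast?_eq_some_getLast (cons_ne_nil _ _), Option.some.injEq] at ht
    rw [hs, listInterior, tail_cons, ← ht, getLast_cons (cons_ne_nil _ _),
      dropLast_concat_getLast]

lemma mem_listInterior_of_mem (hs : l.head? = some s) (ht : l.getLast? = some t)
    (hz : z ∈ l) (hzs : z ≠ s) (hzt : z ≠ t) : z ∈ listInterior l := by
  obtain _ | ⟨a, _ | ⟨b, m⟩⟩ := l
  · simp at hz
  · simp_all
  · rw [List.eq_cons_listInterior_append hs ht (by simp)] at hz
    simp_all

lemma List.Pairwise.rel_of_mem_listInterior (hl : l.Pairwise r) (hs : l.head? = some s)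
    (ht : l.getLast? = some t) (hz : z ∈ listInterior l) : r s z ∧ r z t := by
  have hlen : 2 ≤ l.length := by
    have := List.length_pos_of_mem hz
    simp only [listInterior, length_dropLast, length_tail] at this
    omega
  rw [List.eq_cons_listInterior_append hs ht hlen, pairwise_cons, pairwise_append] at hl
  exact ⟨hl.1 z (mem_append_left _ hz), hl.2.2.2 z hz t (mem_singleton_self t)⟩

lemma List.IsChain.mem_of_forall_rel_into {P : α → Prop} {v : α}
    (hr : ∀ x y, r x y → ¬ P x → P y → y = v) (hl : l.IsChain r)
    (hs : l.head? = some s) (ht : l.getLast? = some t) (hPs : ¬ P s) (hPt : P t) : v ∈ l := by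
  induction l generalizing s with
  | nil => simp at hs
  | cons a m ih =>
    obtain rfl : a = s := by simpa using hs
    cases m with
    | nil =>
      obtain rfl : a = t := by simpa using ht
      exact absurd hPt hPs
    | cons b m =>
      rw [isChain_cons_cons] at hl
      by_cases hPb : P b
      · exact hr a b hl.1 hPs hPb ▸ mem_cons_of_mem _ mem_cons_self
      · exact mem_cons_of_mem _ (ih hl.2 rfl (by rwa [getLast?_cons_cons] at ht) hPb)

lemma exists_forall_not_transGen_of_acyclic [Finite α] (hac : ∀ x, ¬ TransGen r x x)
    {S : Set α} (hS : S.Nonempty) : ∃ w ∈ S, ∀ z ∈ S, ¬ TransGen r w z := by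
  have : IsStrictOrder α (flip (TransGen r)) :=
    { irrefl := hac, trans := fun _ _ _ h₁ h₂ => TransGen.trans h₂ h₁ }
  exact (Finite.wellFounded_of_trans_of_irrefl (flip (TransGen r))).has_min S hS

lemma List.pairwise_four {a b c d : α} :
    [a, b, c, d].Pairwise r ↔ r a b ∧ r a c ∧ r a d ∧ r b c ∧ r b d ∧ r c d := by
  simp only [pairwise_cons, mem_cons, not_mem_nil, forall_eq_or_imp, Pairwise.nil]
  tauto

end Lists

namespace Net

variable {X : Type} {N : Net X}

section Paths

variable {p : List N.V} {s t z : N.V}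

lemma IsDiPath.pairwise_transGen (hp : N.IsDiPath p s t) : p.Pairwise (TransGen N.arc) :=
  List.IsChain.pairwise_transGen hp.1

lemma IsDiPath.transGen_of_mem_listInterior (hp : N.IsDiPath p s t)
    (hz : z ∈ listInterior p) : TransGen N.arc s z ∧ TransGen N.arc z t :=
  hp.pairwise_transGen.rel_of_mem_listInterior hp.2.1 hp.2.2.1 hz

lemma IsDiPath.reflTransGen_s10 (hp : N.IsDiPath p s t) : ReflTransGen N.arc s t := by
  obtain _ | ⟨a, m⟩ := p
  · simp [IsDiPath] at hp
  obtain ⟨hc, hs, ht, -⟩ := hp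
  obtain rfl : a = s := by simpa using hs
  rw [List.getLast?_eq_some_getLast (List.cons_ne_nil _ _), Option.some.injEq] at ht
  exact List.relationReflTransGen_of_exists_isChain_cons m hc ht

lemma exists_isDiPath (hac : ∀ x, ¬ TransGen N.arc x x) (h : ReflTransGen N.arc s t) :
    ∃ p, N.IsDiPath p s t := by
  obtain ⟨m, hc, ht⟩ := List.exists_isChain_cons_of_relationReflTransGen h
  exact ⟨s :: m, hc, rfl, by rw [List.getLast?_eq_some_getLast (List.cons_ne_nil _ _), ht],
    List.IsChain.nodup_of_acyclic hac hc⟩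

end Paths

lemma ne_leaf_of_two_le_outdeg (hphy : N.IsPhylo) {v : N.V} (hv : 2 ≤ N.outdeg v) (x : X) :
    v ≠ N.leaf x := by
  rintro rfl
  rw [(hphy.2.1 _).2 ⟨x, rfl⟩] at hv
  omega

section CutArc

variable {u v x y : N.V}

lemma deleteEdges_adj_of_arc (hac : ∀ x, ¬ TransGen N.arc x x) (huv : N.arc u v)
    (hxy : N.arc x y) (hne : (x, y) ≠ (u, v)) : (N.ugraph.deleteEdges {s(u, v)}).Adj x y := by
  refine SimpleGraph.deleteEdges_adj.2 ⟨⟨?_, Or.inl hxy⟩, ?_⟩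
  · rintro rfl
    exact hac x (TransGen.single hxy)
  · simp only [Set.mem_singleton_iff, Sym2.eq_iff]
    rintro (⟨rfl, rfl⟩ | ⟨rfl, rfl⟩)
    · exact hne rfl
    · exact hac x (TransGen.head hxy (TransGen.single huv))

lemma reachable_deleteEdges_of_reflTransGen_head (hac : ∀ x, ¬ TransGen N.arc x x)
    (huv : N.arc u v) (h : ReflTransGen N.arc v x) :
    (N.ugraph.deleteEdges {s(u, v)}).Reachable v x := by
  induction h with
  | refl => rfl
  | tail hvy hyz ih =>
    refine ih.trans (deleteEdges_adj_of_arc hac huv hyz ?_).reachable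
    rintro ⟨⟩
    exact hac _ (TransGen.tail' hvy hyz)

lemma reachable_deleteEdges_of_not_reflTransGen_head (hac : ∀ x, ¬ TransGen N.arc x x)
    (huv : N.arc u v) (h : ReflTransGen N.arc x y) (hy : ¬ ReflTransGen N.arc v y) :
    (N.ugraph.deleteEdges {s(u, v)}).Reachable x y := by
  induction h using ReflTransGen.head_induction_on with
  | refl => rfl
  | head hab hby ih =>
    refine (deleteEdges_adj_of_arc hac huv hab ?_).reachable.trans ih
    rintro ⟨⟩
    exact hy hby

/-- Otherwise deleting `uv` leaves the graph connected: descendants of `v` are joined to `v`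
by directed paths from `v`, the other vertices to the root by directed paths from the root,
and the arc `xy` joins the two parts. -/
lemma CutArc.eq_head_of_arc (hphy : N.IsPhylo) (hcut : N.CutArc u v) (hxy : N.arc x y)
    (hx : ¬ ReflTransGen N.arc v x) (hy : ReflTransGen N.arc v y) : y = v := by
  by_contra hyv
  obtain ⟨ρ, -, -, hρ⟩ := hphy.2.2.2.1
  have hac : ∀ x, ¬ TransGen N.arc x x := hphy.1
  have hreach (z : N.V) : (N.ugraph.deleteEdges {s(u, v)}).Reachable ρ z := by
    by_cases hz : ReflTransGen N.arc v z
    · have hxy' := deleteEdges_adj_of_arc hac hcut.1 hxy fun h => hyv (Prod.ext_iff.1 h).2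
      exact (reachable_deleteEdges_of_not_reflTransGen_head hac hcut.1 (hρ x) hx).trans <|
        hxy'.reachable.trans <|
        (reachable_deleteEdges_of_reflTransGen_head hac hcut.1 hy).symm.trans <|
        reachable_deleteEdges_of_reflTransGen_head hac hcut.1 hz
    · exact reachable_deleteEdges_of_not_reflTransGen_head hac hcut.1 (hρ z) hz
  have : Nonempty N.V := ⟨ρ⟩
  exact hcut.2 ⟨fun a b => (hreach a).symm.trans (hreach b)⟩

lemma CutArc.mem_listInterior_of_isDiPath (hphy : N.IsPhylo) (hcut : N.CutArc u v)
    (hout : 2 ≤ N.outdeg v) {p : List N.V} {s : N.V} {c : X}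
    (hp : N.IsDiPath p s (N.leaf c)) (hs : ¬ ReflTransGen N.arc v s)
    (hc : c ∈ N.cluster v) : v ∈ listInterior p := by
  have hvp : v ∈ p := List.IsChain.mem_of_forall_rel_into (P := (ReflTransGen N.arc v ·))
    (fun _ _ hxy hx hy => hcut.eq_head_of_arc hphy hxy hx hy) hp.1 hp.2.1 hp.2.2.1 hs hc
  refine mem_listInterior_of_mem hp.2.1 hp.2.2.1 hvp ?_ (ne_leaf_of_two_le_outdeg hphy hout c)
  rintro rfl
  exact hs ReflTransGen.refl

lemma CutArc.not_consistent (hphy : N.IsPhylo) (hcut : N.CutArc u v) (hout : 2 ≤ N.outdeg v)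
    {a b c : X} (ha : a ∈ N.cluster v) (hb : b ∉ N.cluster v) (hc : c ∈ N.cluster v) :
    ¬ N.Consistent a b c := by
  rintro ⟨-, -, -, v₀, w, -, p₁, p₂, p₃, p₄, h₁, h₂, h₃, h₄, hdisj⟩
  have hw : ¬ ReflTransGen N.arc v w := fun h => hb (h.trans h₄.reflTransGen_s10)
  have hv₀ : ¬ ReflTransGen N.arc v v₀ := fun h => hw (h.trans h₂.reflTransGen_s10)
  exact (List.pairwise_four.1 hdisj).2.1 v
    (hcut.mem_listInterior_of_isDiPath hphy hout h₁ hv₀ hc)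
    (hcut.mem_listInterior_of_isDiPath hphy hout h₃ hw ha)

end CutArc

section Triplets

variable {a b c : X}

lemma Consistent.symm (h : N.Consistent a b c) : N.Consistent b a c := by
  obtain ⟨hab, hac, hbc, v, w, hvw, p₁, p₂, p₃, p₄, h₁, h₂, h₃, h₄, hdisj⟩ := h
  obtain ⟨d₁₂, d₁₃, d₁₄, d₂₃, d₂₄, d₃₄⟩ := List.pairwise_four.1 hdisj
  exact ⟨hab.symm, hbc, hac, v, w, hvw, p₁, p₂, p₄, p₃, h₁, h₂, h₄, h₃,
    List.pairwise_four.2 ⟨d₁₂, d₁₄, d₁₃, d₂₄, d₂₃, fun z hz hz' => d₃₄ z hz' hz⟩⟩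

lemma mem_tripletSet_iff : (s(a, b), c) ∈ N.tripletSet ↔ N.Consistent a b c := by
  refine ⟨?_, fun h => ⟨a, b, rfl, h⟩⟩
  rintro ⟨a', b', hs, h⟩
  rcases Sym2.eq_iff.1 hs with ⟨rfl, rfl⟩ | ⟨rfl, rfl⟩
  · exact h
  · exact h.symm

/-- With `w` a lowest common ancestor of `a` and `b` below `v`, and `v₀` one of `w` and `c`,
a vertex shared by the interiors of two of the four paths would contradict acyclicity, the
choice of `w` or `v₀`, or `c ∉ N.cluster v`. -/
lemma consistent_of_mem_cluster (hphy : N.IsPhylo) {v : N.V} (ha : a ∈ N.cluster v)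
    (hb : b ∈ N.cluster v) (hc : c ∉ N.cluster v) (hab : a ≠ b) : N.Consistent a b c := by
  have hac : ∀ z, ¬ TransGen N.arc z z := hphy.1
  obtain ⟨ρ, -, -, hρ⟩ := hphy.2.2.2.1
  obtain ⟨w, ⟨hvw, hwa, hwb⟩, hw⟩ := exists_forall_not_transGen_of_acyclic hac
    (S := {z | ReflTransGen N.arc v z ∧ ReflTransGen N.arc z (N.leaf a) ∧
      ReflTransGen N.arc z (N.leaf b)}) ⟨v, ReflTransGen.refl, ha, hb⟩
  obtain ⟨v₀, ⟨hv₀w, hv₀c⟩, hv₀⟩ := exists_forall_not_transGen_of_acyclic hac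
    (S := {z | ReflTransGen N.arc z w ∧ ReflTransGen N.arc z (N.leaf c)}) ⟨ρ, hρ w, hρ _⟩
  have hne : v₀ ≠ w := by
    rintro rfl
    exact hc (hvw.trans hv₀c)
  obtain ⟨p₁, h₁⟩ := exists_isDiPath hac hv₀c
  obtain ⟨p₂, h₂⟩ := exists_isDiPath hac hv₀w
  obtain ⟨p₃, h₃⟩ := exists_isDiPath hac hwa
  obtain ⟨p₄, h₄⟩ := exists_isDiPath hac hwb
  refine ⟨hab, fun h => hc (h ▸ ha), fun h => hc (h ▸ hb), v₀, w, hne,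
    p₁, p₂, p₃, p₄, h₁, h₂, h₃, h₄, List.pairwise_four.2 ⟨?_, ?_, ?_, ?_, ?_, ?_⟩⟩ <;>
    intro z hz hz'
  · have t₁ := h₁.transGen_of_mem_listInterior hz
    have t₂ := h₂.transGen_of_mem_listInterior hz'
    exact hv₀ z ⟨t₂.2.to_reflTransGen, t₁.2.to_reflTransGen⟩ t₁.1
  · exact hc ((hvw.trans (h₃.transGen_of_mem_listInterior hz').1.to_reflTransGen).trans
      (h₁.transGen_of_mem_listInterior hz).2.to_reflTransGen)
  · exact hc ((hvw.trans (h₄.transGen_of_mem_listInterior hz').1.to_reflTransGen).trans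
      (h₁.transGen_of_mem_listInterior hz).2.to_reflTransGen)
  · exact hac z ((h₂.transGen_of_mem_listInterior hz).2.trans
      (h₃.transGen_of_mem_listInterior hz').1)
  · exact hac z ((h₂.transGen_of_mem_listInterior hz).2.trans
      (h₄.transGen_of_mem_listInterior hz').1)
  · have t₃ := h₃.transGen_of_mem_listInterior hz
    have t₄ := h₄.transGen_of_mem_listInterior hz'
    exact hw z ⟨hvw.trans t₃.1.to_reflTransGen, t₃.2.to_reflTransGen,
      t₄.2.to_reflTransGen⟩ t₃.1

end Triplets

end Net

theorem stmt10_general {X : Type} (N N' : Net X)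
    (hlev : N.IsLevel1) (hlev' : N'.IsLevel1)
    (hsub : N.tripletSet ⊆ N'.tripletSet)
    (v : N.V)
    (u' v' : N'.V) (hcut' : N'.CutArc u' v')
    (hsplit' : N'.indeg v' = 1 ∧ 2 ≤ N'.outdeg v') :
    N.cluster v ∩ N'.cluster v' = ∅ ∨
    N.cluster v ∩ N'.cluster v' = N.cluster v ∨
    N.cluster v ∩ N'.cluster v' = N'.cluster v' := by
  rw [Set.inter_eq_left, Set.inter_eq_right, ← Set.not_nonempty_iff_eq_empty]
  by_contra! h
  obtain ⟨⟨a, ha, ha'⟩, hvv', hv'v⟩ := h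
  obtain ⟨b, hb, hb'⟩ := Set.not_subset.1 hvv'
  obtain ⟨c, hc', hc⟩ := Set.not_subset.1 hv'v
  have hab : a ≠ b := by
    rintro rfl
    exact hb' ha'
  have hN : N.Consistent a b c := Net.consistent_of_mem_cluster hlev.1.1 ha hb hc hab
  exact hcut'.not_consistent hlev'.1.1 hsplit'.2 ha' hb' hc'
    (Net.mem_tripletSet_iff.1 (hsub (Net.mem_tripletSet_iff.2 hN)))

/-- if `N, N'` are binary level-1 networks on the same leaf set of size
`n ≥ 3` with `R(N) ⊆ R(N')`, and `v, v'` are split vertices that are heads of cut arcs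
of `N, N'` respectively, then `C_N(v)` and `C_{N'}(v')` are compatible. -/
theorem stmt10 {X : Type} (N N' : Net X) (hn : 3 ≤ Nat.card X)
    (hlev : N.IsLevel1) (hlev' : N'.IsLevel1)
    (hsub : N.tripletSet ⊆ N'.tripletSet)
    (u v : N.V) (hcut : N.CutArc u v)
    (hsplit : N.indeg v = 1 ∧ 2 ≤ N.outdeg v)
    (u' v' : N'.V) (hcut' : N'.CutArc u' v')
    (hsplit' : N'.indeg v' = 1 ∧ 2 ≤ N'.outdeg v') :
    N.cluster v ∩ N'.cluster v' = ∅ ∨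
    N.cluster v ∩ N'.cluster v' = N.cluster v ∨
    N.cluster v ∩ N'.cluster v' = N'.cluster v' :=
  stmt10_general N N' hlev hlev' hsub v u' v' hcut' hsplit'
end

section
/- Let N and N' be binary level-1 networks on the same leaf set with R(N) ⊆ R(N'), and let v, v' be split vertices of N, N' respectively, heads of cut arcs, such that C_N(v) ⊊ C_{N'}(v'). Then C_N(v) is not a maximal SN-set of R(N). -/
open Relation

/-!
Let `u → v` be a cut arc of a level-1 network with `v` a split vertex. Every directed path
entering the part below `v` passes through `u → v`, so no consistent triplet `xy|z` has `x, z`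
below `v` and `y` not: `C(v)` is an SN-set. It is non-trivial: if every leaf lay below `v`,
every vertex outside that part would reach `u`, so `u` would be a hybrid vertex, and so would
a lowest vertex outside that part other than `u`, whose only child is `u`. But a level-1
network has no arc between two hybrid vertices, since the arc and the other parent of its
head span a cycle. Since `R(N) ⊆ R(N')`, `C_{N'}(v')` is then a non-trivial SN-set of `R(N)`
strictly containing `C_N(v)`.
-/

lemma mem_listInterior_of_ne_s11 {α : Type*} {l : List α} {x a b : α} (hx : x ∈ l)
    (ha : l.head? = some a) (hb : l.getLast? = some b) (hxa : x ≠ a) (hxb : x ≠ b) :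
    x ∈ listInterior l := by
  obtain _ | ⟨a', t⟩ := l
  · simp at hx
  obtain rfl : a' = a := by simpa using ha
  have hxt : x ∈ t := (List.mem_cons.mp hx).resolve_left hxa
  exact List.mem_dropLast_of_mem_of_ne_getLast? hxt (by grind)

namespace Net

variable {X : Type} {M : Net X}

def desc (M : Net X) (d : M.V) : Set M.V := {z | ReflTransGen M.arc d z}

lemma mem_desc_self (d : M.V) : d ∈ M.desc d := ReflTransGen.refl

def Acyclic (M : Net X) : Prop := ∀ w, ¬ TransGen M.arc w w

lemma IsPhylo.acyclic (hM : M.IsPhylo) : M.Acyclic := hM.1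

section Acyclic

variable (hM : M.Acyclic)
include hM

lemma Acyclic.ne_of_arc {a b : M.V} (h : M.arc a b) : a ≠ b := by
  rintro rfl
  exact hM a (.single h)

lemma Acyclic.notMem_desc_of_arc {a d : M.V} (h : M.arc a d) : a ∉ M.desc d :=
  fun ha => hM a (.head' h ha)

lemma Acyclic.wellFounded : WellFounded (flip (TransGen M.arc)) :=
  haveI : IsTrans M.V (flip (TransGen M.arc)) := ⟨fun _ _ _ h₁ h₂ => h₂.trans h₁⟩
  haveI : Std.Irrefl (flip (TransGen M.arc)) := ⟨hM⟩
  Finite.wellFounded_of_trans_of_irrefl _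

lemma Acyclic.deleteEdges_adj_of_arc {a b : M.V} {e : Sym2 M.V} (h : M.arc a b)
    (he : s(a, b) ≠ e) : (M.ugraph.deleteEdges {e}).Adj a b :=
  SimpleGraph.deleteEdges_adj.mpr ⟨⟨hM.ne_of_arc h, .inl h⟩, he⟩

lemma Acyclic.reachable_deleteEdges_of_notMem_desc {d t q x y : M.V} (hq : q ∈ M.desc d)
    (h : ReflTransGen M.arc x y) (hy : y ∉ M.desc d) :
    (M.ugraph.deleteEdges {s(t, q)}).Reachable x y := by
  induction h with
  | refl => exact .refl _
  | @tail b c _ hbc ih =>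
    have hb : b ∉ M.desc d := fun hb => hy (ReflTransGen.tail hb hbc)
    refine (ih hb).trans (hM.deleteEdges_adj_of_arc hbc ?_).reachable
    rw [Ne, Sym2.eq_iff]
    rintro (⟨-, rfl⟩ | ⟨rfl, -⟩)
    exacts [hy hq, hb hq]

lemma Acyclic.reachable_deleteEdges_of_mem_desc {d t q x y : M.V} (ht : t ∉ M.desc d)
    (hx : x ∈ M.desc d) (h : ReflTransGen M.arc x y) :
    (M.ugraph.deleteEdges {s(t, q)}).Reachable x y := by
  induction h with
  | refl => exact .refl _
  | @tail b c hxb hbc ih =>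
    have hb : b ∈ M.desc d := ReflTransGen.trans hx hxb
    refine ih.trans (hM.deleteEdges_adj_of_arc hbc ?_).reachable
    rw [Ne, Sym2.eq_iff]
    rintro (⟨rfl, -⟩ | ⟨-, rfl⟩)
    exacts [ht hb, ht (ReflTransGen.tail hb hbc)]

end Acyclic

lemma eq_of_mem_desc_of_indeg_eq_zero {ρ d : M.V} (hρ : M.indeg ρ = 0) (h : ρ ∈ M.desc d) :
    ρ = d := by
  rcases ReflTransGen.cases_tail h with h | ⟨c, -, hc⟩
  · exact h
  · exact absurd hρ (Set.ncard_ne_zero_of_mem (s := {z | M.arc z ρ}) hc)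

lemma eq_of_arc_of_arc_of_indeg_eq_one {a b v : M.V} (hin : M.indeg v = 1) (ha : M.arc a v)
    (hb : M.arc b v) : a = b := by
  obtain ⟨w, hw⟩ := Set.ncard_eq_one.mp hin
  have ha' : a ∈ {z | M.arc z v} := ha
  have hb' : b ∈ {z | M.arc z v} := hb
  rw [hw] at ha' hb'
  exact ha'.trans hb'.symm

lemma outdeg_eq_one_of_forall_arc_eq {w c : M.V} (hc : M.arc w c)
    (h : ∀ b, M.arc w b → b = c) : M.outdeg w = 1 :=
  Set.ncard_eq_one.mpr ⟨c, Set.eq_singleton_iff_unique_mem.mpr ⟨hc, h⟩⟩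

lemma IsDiPath.reflTransGen_s11 {l : List M.V} {a b : M.V} (h : M.IsDiPath l a b) :
    ReflTransGen M.arc a b := by
  obtain ⟨hc, ha, hb, -⟩ := h
  have hne : l ≠ [] := by rintro rfl; simp at ha
  rw [List.head?_eq_some_head hne, Option.some.injEq] at ha
  rw [List.getLast?_eq_some_getLast hne, Option.some.injEq] at hb
  exact ha ▸ hb ▸ List.relationReflTransGen_of_exists_isChain l hc hne

lemma IsPhylo.exists_arc_of_not_isLeaf (hM : M.IsPhylo) {w : M.V} (hw : ¬ M.IsLeaf w) :
    ∃ b, M.arc w b :=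
  Set.nonempty_of_ncard_ne_zero (mt (hM.2.1 w).mp hw)

lemma IsPhylo.exists_leaf_mem_desc (hM : M.IsPhylo) (w : M.V) : ∃ x, M.leaf x ∈ M.desc w := by
  induction w using hM.acyclic.wellFounded.induction with | _ w ih
  by_cases hw : M.IsLeaf w
  · obtain ⟨x, rfl⟩ := hw
    exact ⟨x, mem_desc_self _⟩
  · obtain ⟨b, hb⟩ := hM.exists_arc_of_not_isLeaf hw
    obtain ⟨x, hx⟩ := ih b (.single hb)
    exact ⟨x, ReflTransGen.head hb hx⟩

lemma IsBinary.indeg_eq_two_of_outdeg_eq_one (hM : M.IsBinary) {w : M.V}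
    (h : M.outdeg w = 1) : M.indeg w = 2 := by
  rcases hM.2 w with hw | hw | hw
  · have := (hM.1.2.1 w).2 hw
    omega
  · omega
  · exact hw.1

lemma IsPhylo.exists_isCycle_of_arc_of_arc (hM : M.IsPhylo) {m p u : M.V} (hm : M.arc m u)
    (hp : M.arc p u) (hpm : p ≠ m) :
    ∃ (c : M.V) (q : M.ugraph.Walk c c), q.IsCycle ∧ m ∈ q.support ∧ u ∈ q.support := by
  obtain ⟨ρ, -, -, hρ⟩ := hM.2.2.2.1
  have hac := hM.acyclic
  have hpu : s(p, u) ≠ s(m, u) := by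
    rw [Ne, Sym2.eq_iff]
    rintro (⟨rfl, -⟩ | ⟨rfl, -⟩)
    exacts [hpm rfl, hac.ne_of_arc hp rfl]
  -- both parents are reached from the root without touching `u`
  have hreach : (M.ugraph.deleteEdges {s(m, u)}).Reachable m u :=
    (hac.reachable_deleteEdges_of_notMem_desc (mem_desc_self u) (hρ m)
      (hac.notMem_desc_of_arc hm)).symm.trans <|
    (hac.reachable_deleteEdges_of_notMem_desc (mem_desc_self u) (hρ p)
      (hac.notMem_desc_of_arc hp)).trans (hac.deleteEdges_adj_of_arc hp hpu).reachable
  obtain ⟨c, q, hq, he⟩ := SimpleGraph.adj_and_reachable_delete_edges_iff_exists_cycle.mp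
    ⟨(⟨hac.ne_of_arc hm, .inl hm⟩ : M.ugraph.Adj m u), hreach⟩
  exact ⟨c, q, hq, q.fst_mem_support_of_mem_edges he, q.snd_mem_support_of_mem_edges he⟩

lemma IsLevel1.not_isHybrid_of_arc (hM : M.IsLevel1) {m u : M.V} (h : M.arc m u)
    (hm : M.IsHybrid m) : ¬ M.IsHybrid u := by
  intro hu
  obtain ⟨p, hp, hpm⟩ := Set.exists_ne_of_one_lt_ncard (s := {z | M.arc z u}) hu m
  obtain ⟨c, q, hq, hmq, huq⟩ := hM.1.1.exists_isCycle_of_arc_of_arc h hp hpm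
  exact hM.1.1.acyclic.ne_of_arc h (hM.2.2 c q hq m hmq u huq hm hu)

namespace CutArc

variable {u v : M.V} (hM : M.IsPhylo) (hcut : M.CutArc u v) (hin : M.indeg v = 1)
include hM hcut hin

lemma eq_of_arc_of_notMem_desc {a b : M.V} (hab : M.arc a b) (ha : a ∉ M.desc v)
    (hb : b ∈ M.desc v) : a = u ∧ b = v := by
  by_cases hbv : b = v
  · subst hbv
    exact ⟨eq_of_arc_of_arc_of_indeg_eq_one hin hab hcut.1, rfl⟩
  refine absurd ?_ hcut.2
  obtain ⟨ρ, -, -, hρ⟩ := hM.2.2.2.1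
  have hac := hM.acyclic
  have hu : u ∉ M.desc v := hac.notMem_desc_of_arc hcut.1
  have hab' : s(a, b) ≠ s(u, v) := by
    rw [Ne, Sym2.eq_iff]
    rintro (⟨-, rfl⟩ | ⟨rfl, -⟩)
    exacts [hbv rfl, ha (mem_desc_self a)]
  have hout : ∀ w ∉ M.desc v, (M.ugraph.deleteEdges {s(u, v)}).Reachable ρ w := fun w hw =>
    hac.reachable_deleteEdges_of_notMem_desc (mem_desc_self v) (hρ w) hw
  have hbelow : ∀ w ∈ M.desc v, (M.ugraph.deleteEdges {s(u, v)}).Reachable v w := fun w hw =>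
    hac.reachable_deleteEdges_of_mem_desc hu (mem_desc_self v) hw
  have hρv : (M.ugraph.deleteEdges {s(u, v)}).Reachable ρ v :=
    (hout a ha).trans ((hac.deleteEdges_adj_of_arc hab hab').reachable.trans (hbelow b hb).symm)
  refine (SimpleGraph.connected_iff_exists_forall_reachable _).mpr ⟨ρ, fun w => ?_⟩
  by_cases hw : w ∈ M.desc v
  exacts [hρv.trans (hbelow w hw), hout w hw]

lemma reflTransGen_of_notMem_desc {x y : M.V} (h : ReflTransGen M.arc x y)
    (hx : x ∉ M.desc v) (hy : y ∈ M.desc v) : ReflTransGen M.arc x u := by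
  induction h with
  | refl => exact absurd hy hx
  | @tail b c hxb hbc ih =>
    by_cases hb : b ∈ M.desc v
    · exact ih hb
    · obtain ⟨rfl, -⟩ := hcut.eq_of_arc_of_notMem_desc hM hin hbc hb hy
      exact hxb

lemma mem_of_isChain {l : List M.V} (hl : l.IsChain M.arc) {a b : M.V}
    (ha : l.head? = some a) (hb : l.getLast? = some b) (had : a ∉ M.desc v)
    (hbd : b ∈ M.desc v) : v ∈ l := by
  induction l generalizing a with
  | nil => simp at ha
  | cons a' t ih =>
    obtain rfl : a' = a := by simpa using ha
    obtain _ | ⟨c, t'⟩ := t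
    · obtain rfl : a' = b := by simpa using hb
      exact absurd hbd had
    rw [List.isChain_cons_cons] at hl
    by_cases hcd : c ∈ M.desc v
    · obtain ⟨-, rfl⟩ := hcut.eq_of_arc_of_notMem_desc hM hin hl.1 had hcd
      simp
    · exact List.mem_cons_of_mem _ (ih hl.2 rfl (by simpa using hb) hcd)

lemma mem_listInterior_of_isDiPath_s11 (hv : ¬ M.IsLeaf v) {l : List M.V} {a : M.V} {x : X}
    (hp : M.IsDiPath l a (M.leaf x)) (ha : a ∉ M.desc v) (hx : x ∈ M.cluster v) :
    v ∈ listInterior l :=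
  mem_listInterior_of_ne_s11 (hcut.mem_of_isChain hM hin hp.1 hp.2.1 hp.2.2.1 ha hx) hp.2.1 hp.2.2.1
    (by rintro rfl; exact ha (mem_desc_self v)) (fun h => hv ⟨x, h.symm⟩)

lemma mem_cluster_of_consistent (hv : ¬ M.IsLeaf v) {x y z : X} (hc : M.Consistent x y z)
    (hz : z ∈ M.cluster v) (hxy : x ∈ M.cluster v ∨ y ∈ M.cluster v) :
    x ∈ M.cluster v ∧ y ∈ M.cluster v := by
  obtain ⟨-, -, -, s, w, -, p₁, p₂, p₃, p₄, h₁, h₂, h₃, h₄, hdisj⟩ := hc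
  by_cases hw : w ∈ M.desc v
  · exact ⟨ReflTransGen.trans hw h₃.reflTransGen_s11, ReflTransGen.trans hw h₄.reflTransGen_s11⟩
  have hs : s ∉ M.desc v := fun hs => hw (ReflTransGen.trans hs h₂.reflTransGen_s11)
  have hv₁ := hcut.mem_listInterior_of_isDiPath_s11 hM hin hv h₁ hs hz
  simp only [List.pairwise_cons, List.mem_cons, List.not_mem_nil] at hdisj
  rcases hxy with hx | hy
  · exact absurd (hcut.mem_listInterior_of_isDiPath_s11 hM hin hv h₃ hw hx)
      (hdisj.1 p₃ (by simp) v hv₁)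
  · exact absurd (hcut.mem_listInterior_of_isDiPath_s11 hM hin hv h₄ hw hy)
      (hdisj.1 p₄ (by simp) v hv₁)

lemma isSNSet_cluster_of_tripletSet_subset (hv : ¬ M.IsLeaf v) {N : Net X}
    (hsub : N.tripletSet ⊆ M.tripletSet) : N.IsSNSet (M.cluster v) := by
  intro a b c habc ha hc
  obtain ⟨a', b', hab, habc'⟩ := hsub (show (s(a, b), c) ∈ N.tripletSet from ⟨a, b, rfl, habc⟩)
  rcases Sym2.eq_iff.mp hab with ⟨rfl, rfl⟩ | ⟨rfl, rfl⟩
  · exact (hcut.mem_cluster_of_consistent hM hin hv habc' hc (.inl ha)).2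
  · exact (hcut.mem_cluster_of_consistent hM hin hv habc' hc (.inr ha)).1

end CutArc

lemma IsLevel1.cluster_ne_univ (hM : M.IsLevel1) {u v : M.V} (hcut : M.CutArc u v)
    (hin : M.indeg v = 1) : M.cluster v ≠ Set.univ := by
  intro huniv
  have hP := hM.1.1
  have hac := hP.acyclic
  have hleaf (x : X) : M.leaf x ∈ M.desc v := (huniv ▸ Set.mem_univ x : x ∈ M.cluster v)
  have hreach (w : M.V) (hw : w ∉ M.desc v) : ReflTransGen M.arc w u :=
    let ⟨x, hx⟩ := hP.exists_leaf_mem_desc w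
    hcut.reflTransGen_of_notMem_desc hP hin hx hw (hleaf x)
  have hu : u ∉ M.desc v := hac.notMem_desc_of_arc hcut.1
  have hu_hyb : M.IsHybrid u := by
    refine (hM.1.indeg_eq_two_of_outdeg_eq_one (outdeg_eq_one_of_forall_arc_eq hcut.1
      fun b hb => ?_)).ge
    by_cases hbv : b ∈ M.desc v
    · exact (hcut.eq_of_arc_of_notMem_desc hP hin hb hu hbv).2
    · exact absurd (TransGen.head' hb (hreach b hbv)) (hac u)
  obtain ⟨ρ, hρ, -, -⟩ := hP.2.2.2.1
  have hρ_mem : ρ ∈ {w | w ∉ M.desc v ∧ w ≠ u} := by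
    refine ⟨fun h => ?_, fun h => ?_⟩
    · rw [eq_of_mem_desc_of_indeg_eq_zero hρ h] at hρ
      omega
    · rw [IsHybrid, ← h] at hu_hyb
      omega
  -- `m` has no proper descendant outside `desc v ∪ {u}`
  obtain ⟨m, ⟨hmv, hmu⟩, hmax⟩ := hac.wellFounded.has_min _ ⟨ρ, hρ_mem⟩
  have hm_child (b : M.V) (hb : M.arc m b) : b = u := by
    by_contra hbu
    by_cases hbv : b ∈ M.desc v
    · exact hmu (hcut.eq_of_arc_of_notMem_desc hP hin hb hmv hbv).1
    · exact hmax b ⟨hbv, hbu⟩ (.single hb)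
  obtain ⟨b, hb⟩ := hP.exists_arc_of_not_isLeaf (w := m) (by rintro ⟨x, rfl⟩; exact hmv (hleaf x))
  have hmu_arc : M.arc m u := hm_child b hb ▸ hb
  have hm_hyb : M.IsHybrid m :=
    (hM.1.indeg_eq_two_of_outdeg_eq_one (outdeg_eq_one_of_forall_arc_eq hmu_arc hm_child)).ge
  exact hM.not_isHybrid_of_arc hmu_arc hm_hyb hu_hyb

end Net

theorem stmt11_general {X : Type} (N N' : Net X)
    (hlev' : N'.IsLevel1)
    (hsub : N.tripletSet ⊆ N'.tripletSet)
    (v : N.V)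
    (u' v' : N'.V) (hcut' : N'.CutArc u' v')
    (hsplit' : N'.indeg v' = 1 ∧ 2 ≤ N'.outdeg v')
    (hss : N.cluster v ⊂ N'.cluster v') :
    ¬ N.IsMaximalSNSet (N.cluster v) := by
  rintro ⟨-, -, hmax⟩
  have hP := hlev'.1.1
  have hv' : ¬ N'.IsLeaf v' := fun h => by
    have := (hP.2.1 v').2 h
    omega
  have hSN := hcut'.isSNSet_cluster_of_tripletSet_subset hP hsplit'.1 hv' hsub
  exact hss.ne (hmax _ hSN (hlev'.cluster_ne_univ hcut' hsplit'.1) hss.subset)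

/-- in the setting of compatible clusters, if moreover
`C_N(v) ⊊ C_{N'}(v')` then `C_N(v)` is not a maximal SN-set of `R(N)`. -/
theorem stmt11 {X : Type} (N N' : Net X)
    (hlev : N.IsLevel1) (hlev' : N'.IsLevel1)
    (hsub : N.tripletSet ⊆ N'.tripletSet)
    (u v : N.V) (hcut : N.CutArc u v)
    (hsplit : N.indeg v = 1 ∧ 2 ≤ N.outdeg v)
    (u' v' : N'.V) (hcut' : N'.CutArc u' v')
    (hsplit' : N'.indeg v' = 1 ∧ 2 ≤ N'.outdeg v')
    (hss : N.cluster v ⊂ N'.cluster v') :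
    ¬ N.IsMaximalSNSet (N.cluster v) :=
  stmt11_general N N' hlev' hsub v u' v' hcut' hsplit' hss
end

section
/- If T is a collection of phylogenetic trees on X all displayed by a binary level-1 network N, and N' is a binary level-1 network on X whose softwired cluster system contains the union of the cluster systems of all trees in T, and moreover R(N) equals the union of the triplet systems of the trees in T, then R(N) ⊆ R(N'). -/
open Relation

/-!
A triplet `ab|c` of `N` is consistent with some tree `T` of the collection. As `T` is
displayed by the binary network `N`, no vertex of `T` has three children, and this forces the
vertex of `T` at which the paths to `a` and `b` split to have a cluster containing `a`, `b` but
not `c`. That cluster is a cluster of a tree `T'` displayed by `N'`. In `T'` let `w` be a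
deepest common ancestor of `a` and `b` below it, and `v` a deepest common ancestor of `w` and
`c`: the tree paths `v → c`, `v → w`, `w → a`, `w → b` meet only at their ends, and the
subdivision of `T'` inside `N'` turns them into paths witnessing `ab|c` in `N'`.
-/

def MeetAtMost {α : Type*} (p q : List α) (e : α) : Prop := ∀ x ∈ p, x ∈ q → x = e

theorem listInterior_sublist {α : Type*} (p : List α) : (listInterior p).Sublist p :=
  (List.dropLast_sublist _).trans (List.tail_sublist p)

namespace Net

variable {X : Type} {N T : Net X}

theorem IsPhylo.acyclic_s19 (h : N.IsPhylo) (v : N.V) : ¬ TransGen N.arc v v := h.1 v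

theorem IsPhylo.irrefl (h : N.IsPhylo) (v : N.V) : ¬ N.arc v v :=
  fun hv => h.acyclic_s19 v (TransGen.single hv)

theorem IsPhylo.eq_of_reflTransGen_leaf (h : N.IsPhylo) {x : X} {v : N.V}
    (hv : ReflTransGen N.arc (N.leaf x) v) : v = N.leaf x := by
  rcases hv.cases_head with rfl | ⟨w, hw, -⟩
  · rfl
  · have hw : w ∈ {w | N.arc (N.leaf x) w} := hw
    rw [(Set.ncard_eq_zero).1 ((h.2.1 _).2 ⟨x, rfl⟩)] at hw
    exact hw.elim

theorem IsPhylo.eq_of_reflTransGen_leaf_leaf (h : N.IsPhylo) {x y : X}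
    (hxy : ReflTransGen N.arc (N.leaf x) (N.leaf y)) : x = y :=
  (N.leaf_inj (h.eq_of_reflTransGen_leaf hxy)).symm

theorem IsPhylo.exists_root (h : N.IsPhylo) : ∃ ρ, ∀ v, ReflTransGen N.arc ρ v :=
  let ⟨ρ, _, _, hρ⟩ := h.2.2.2.1
  ⟨ρ, hρ⟩

theorem IsBinary.outdeg_le_two (h : N.IsBinary) (v : N.V) : N.outdeg v ≤ 2 := by
  rcases h.2 v with ⟨x, rfl⟩ | ⟨-, h⟩ | ⟨-, h⟩
  · rw [(h.1.2.1 _).2 ⟨x, rfl⟩]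
    omega
  · exact h.le
  · omega

theorem eq_or_eq_of_outdeg_le_two {v y₁ y₂ y₃ : N.V} (h : N.outdeg v ≤ 2)
    (h₁ : N.arc v y₁) (h₂ : N.arc v y₂) (h₃ : N.arc v y₃) : y₁ = y₂ ∨ y₁ = y₃ ∨ y₂ = y₃ := by
  by_contra! hne
  obtain ⟨h₁₂, h₁₃, h₂₃⟩ := hne
  have hsub : ({y₁, y₂, y₃} : Set N.V) ⊆ {w | N.arc v w} := by
    rintro z (rfl | rfl | rfl) <;> assumption
  have := Set.ncard_le_ncard hsub
  rw [Set.ncard_eq_three.2 ⟨y₁, y₂, y₃, h₁₂, h₁₃, h₂₃, rfl⟩] at this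
  exact absurd (this.trans h) (by omega)

namespace IsDiPath

variable {p : List N.V} {u v w x : N.V}

theorem singleton (u : N.V) : N.IsDiPath [u] u u :=
  ⟨List.isChain_singleton u, rfl, rfl, List.nodup_singleton u⟩

theorem eq_cons (hp : N.IsDiPath p u v) : ∃ q, p = u :: q := by
  obtain ⟨-, hh, -, -⟩ := hp
  cases p with
  | nil => simp at hh
  | cons a q => exact ⟨q, by simpa using hh⟩

theorem head_eq {a : N.V} {q : List N.V} (hp : N.IsDiPath (a :: q) u v) : a = u := by
  simpa using hp.2.1

theorem eq_of_singleton (hp : N.IsDiPath [u] u v) : u = v := by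
  simpa using hp.2.2.1

theorem head_mem (hp : N.IsDiPath p u v) : u ∈ p := by
  obtain ⟨q, rfl⟩ := hp.eq_cons
  exact List.mem_cons_self

theorem of_cons_cons {t : N.V} {q : List N.V} (hp : N.IsDiPath (u :: t :: q) u v) :
    N.arc u t ∧ N.IsDiPath (t :: q) t v := by
  obtain ⟨hc, -, hl, hn⟩ := hp
  rw [List.Chain', List.isChain_cons_cons] at hc
  exact ⟨hc.1, hc.2, rfl, by rwa [List.getLast?_cons_cons] at hl, (List.nodup_cons.1 hn).2⟩

theorem reflTransGen_of_mem (hp : N.IsDiPath p u v) (hx : x ∈ p) :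
    ReflTransGen N.arc u x ∧ ReflTransGen N.arc x v := by
  induction p generalizing u x with
  | nil => simp at hx
  | cons a q ih =>
    obtain rfl := hp.head_eq
    cases q with
    | nil =>
      obtain rfl := hp.eq_of_singleton
      obtain rfl := List.mem_singleton.1 hx
      exact ⟨.refl, .refl⟩
    | cons t q =>
      obtain ⟨harc, htail⟩ := hp.of_cons_cons
      rcases List.mem_cons.1 hx with rfl | hx
      · exact ⟨.refl, (ih htail (List.mem_cons_self (l := q))).2.head harc⟩
      · exact (ih htail hx).imp (·.head harc) id

theorem cons (hacyc : ∀ v, ¬ TransGen N.arc v v) (harc : N.arc u w)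
    (hp : N.IsDiPath p w v) : N.IsDiPath (u :: p) u v := by
  obtain ⟨q, rfl⟩ := hp.eq_cons
  obtain ⟨hc, -, hl, hn⟩ := hp
  refine ⟨List.isChain_cons_cons.2 ⟨harc, hc⟩, rfl, by rwa [List.getLast?_cons_cons],
    List.nodup_cons.2 ⟨fun hu => ?_, hn⟩⟩
  exact hacyc u (TransGen.head' harc (reflTransGen_of_mem ⟨hc, rfl, hl, hn⟩ hu).1)

theorem append (hacyc : ∀ v, ¬ TransGen N.arc v v) {q : List N.V}
    (hp : N.IsDiPath p u w) (hq : N.IsDiPath q w v) : N.IsDiPath (p ++ q.tail) u v := by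
  induction p generalizing u with
  | nil => simp [IsDiPath] at hp
  | cons a r ih =>
    obtain rfl := hp.head_eq
    cases r with
    | nil =>
      obtain rfl := hp.eq_of_singleton
      obtain ⟨q, rfl⟩ := hq.eq_cons
      exact hq
    | cons t r =>
      obtain ⟨harc, htail⟩ := hp.of_cons_cons
      exact cons hacyc harc (ih htail)

theorem exists_arc_mem (hp : N.IsDiPath p u v) (hne : u ≠ v) :
    ∃ s ∈ p, N.arc u s ∧ s ≠ u := by
  obtain ⟨q, rfl⟩ := hp.eq_cons
  cases q with
  | nil => exact absurd hp.eq_of_singleton hne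
  | cons t q =>
    refine ⟨t, by simp, hp.of_cons_cons.1, fun h => ?_⟩
    exact (List.nodup_cons.1 hp.2.2.2).1 (by simp [h])

theorem mem_listInterior_iff (hp : N.IsDiPath p u v) :
    x ∈ listInterior p ↔ x ∈ p ∧ x ≠ u ∧ x ≠ v := by
  obtain ⟨q, rfl⟩ := hp.eq_cons
  obtain ⟨-, -, hl, hn⟩ := hp
  rcases List.eq_nil_or_concat q with rfl | ⟨L, b, rfl⟩
  · obtain rfl : u = v := by simpa using hl
    simp [listInterior]
  · rw [List.concat_eq_append, ← List.cons_append, List.getLast?_concat, Option.some.injEq] at hl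
    subst hl
    rw [List.concat_eq_append, ← List.cons_append, List.nodup_append, List.nodup_cons] at hn
    rw [List.concat_eq_append]
    have : listInterior (u :: (L ++ [b])) = L := by simp [listInterior]
    rw [this]
    aesop

theorem listInterior_disjoint (hp : N.IsDiPath p u v) {q : List N.V} {e : N.V}
    (h : MeetAtMost p q e) (he : e = u ∨ e = v) :
    ∀ x ∈ listInterior p, x ∉ listInterior q := by
  intro x hx hxq
  obtain ⟨hxp, hxu, hxv⟩ := hp.mem_listInterior_iff.1 hx
  have := h x hxp ((listInterior_sublist q).subset hxq)
  rcases he with rfl | rfl <;> contradiction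

end IsDiPath

section Acyclic

variable (hacyc : ∀ v, ¬ TransGen N.arc v v)
include hacyc

theorem reflTransGen_antisymm {u v : N.V} (h₁ : ReflTransGen N.arc u v)
    (h₂ : ReflTransGen N.arc v u) : u = v := by
  rcases reflTransGen_iff_eq_or_transGen.1 h₁ with h | h
  · exact h.symm
  · exact (hacyc u (h.trans_left h₂)).elim

theorem exists_isDiPath_s19 {u v : N.V} (h : ReflTransGen N.arc u v) : ∃ p, N.IsDiPath p u v := by
  induction h using ReflTransGen.head_induction_on with
  | refl => exact ⟨[v], .singleton v⟩
  | head harc _ ih =>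
    obtain ⟨p, hp⟩ := ih
    exact ⟨_, hp.cons hacyc harc⟩

theorem exists_isDiPath_of_arc {u y x : N.V} (harc : N.arc u y) (h : ReflTransGen N.arc y x) :
    ∃ p, N.IsDiPath p u x ∧ ∀ z ∈ p, z = u ∨ ReflTransGen N.arc y z := by
  obtain ⟨q, hq⟩ := exists_isDiPath_s19 hacyc h
  refine ⟨u :: q, hq.cons hacyc harc, fun z hz => ?_⟩
  rcases List.mem_cons.1 hz with rfl | hz
  · exact .inl rfl
  · exact .inr (hq.reflTransGen_of_mem hz).1

theorem meetAtMost_of_isDiPath {p q : List N.V} {u w v : N.V}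
    (hp : N.IsDiPath p u w) (hq : N.IsDiPath q w v) : MeetAtMost p q w := by
  intro x hxp hxq
  exact reflTransGen_antisymm hacyc (hp.reflTransGen_of_mem hxp).2 (hq.reflTransGen_of_mem hxq).1

/-- `w` is a deepest common ancestor of `x` and `y` below `u`. -/
theorem exists_fork {u x y : N.V} (hx : ReflTransGen N.arc u x) (hy : ReflTransGen N.arc u y)
    (hxy : ¬ ReflTransGen N.arc x y) (hyx : ¬ ReflTransGen N.arc y x) :
    ∃ w y₁ y₂, ReflTransGen N.arc u w ∧ N.arc w y₁ ∧ N.arc w y₂ ∧ y₁ ≠ y₂ ∧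
      ReflTransGen N.arc y₁ x ∧ ReflTransGen N.arc y₂ y := by
  have : IsTrans N.V (flip (TransGen N.arc)) := ⟨fun _ _ _ h₁ h₂ => h₂.trans h₁⟩
  have : Std.Irrefl (flip (TransGen N.arc)) := ⟨hacyc⟩
  obtain ⟨w, ⟨huw, hwx, hwy⟩, hmax⟩ :=
    (Finite.wellFounded_of_trans_of_irrefl (flip (TransGen N.arc))).has_min
      {z | ReflTransGen N.arc u z ∧ ReflTransGen N.arc z x ∧ ReflTransGen N.arc z y}
      ⟨u, .refl, hx, hy⟩
  obtain ⟨y₁, hw₁, h₁⟩ := hwx.cases_head.resolve_left fun h => hxy (h ▸ hwy)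
  obtain ⟨y₂, hw₂, h₂⟩ := hwy.cases_head.resolve_left fun h => hyx (h ▸ hwx)
  refine ⟨w, y₁, y₂, huw, hw₁, hw₂, fun h => ?_, h₁, h₂⟩
  subst h
  exact hmax y₁ ⟨huw.tail hw₁, h₁, h₂⟩ (TransGen.single hw₁)

end Acyclic

namespace IsTree

variable (htree : N.IsTree)
include htree

theorem eq_of_arc {u u' v : N.V} (hu : N.arc u v) (hu' : N.arc u' v) : u = u' :=
  (Set.ncard_le_one (Set.toFinite _)).1 (htree v) u hu u' hu'

theorem reflTransGen_total {u u' v : N.V} (hu : ReflTransGen N.arc u v)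
    (hu' : ReflTransGen N.arc u' v) : ReflTransGen N.arc u u' ∨ ReflTransGen N.arc u' u := by
  induction hu' with
  | refl => exact .inl hu
  | tail _ hyz ih =>
    rcases hu.cases_tail with rfl | ⟨w, huw, hwz⟩
    · exact .inr (.tail ‹_› hyz)
    · exact ih (eq_of_arc htree hwz hyz ▸ huw)

variable (hacyc : ∀ v, ¬ TransGen N.arc v v)
include hacyc

theorem not_reflTransGen_of_siblings {v y₁ y₂ x : N.V} (h₁ : N.arc v y₁) (h₂ : N.arc v y₂)
    (hne : y₁ ≠ y₂) (hx₁ : ReflTransGen N.arc y₁ x) (hx₂ : ReflTransGen N.arc y₂ x) : False := by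
  have below : ∀ {y y'}, N.arc v y → N.arc v y' → y ≠ y' → ¬ ReflTransGen N.arc y y' := by
    intro y y' hy hy' hne' h
    rcases h.cases_tail with rfl | ⟨z, hyz, hzy'⟩
    · exact hne' rfl
    · exact hacyc v (TransGen.head' hy (eq_of_arc htree hzy' hy' ▸ hyz))
  rcases reflTransGen_total htree hx₁ hx₂ with h | h
  · exact below h₁ h₂ hne h
  · exact below h₂ h₁ hne.symm h

theorem meetAtMost_of_siblings {w y₁ y₂ : N.V} {p q : List N.V} (h₁ : N.arc w y₁)
    (h₂ : N.arc w y₂) (hne : y₁ ≠ y₂) (hp : ∀ z ∈ p, z = w ∨ ReflTransGen N.arc y₁ z)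
    (hq : ∀ z ∈ q, z = w ∨ ReflTransGen N.arc y₂ z) : MeetAtMost p q w := by
  intro x hxp hxq
  rcases hp x hxp with h | hx₁
  · exact h
  rcases hq x hxq with h | hx₂
  · exact h
  exact (not_reflTransGen_of_siblings htree hacyc h₁ h₂ hne hx₁ hx₂).elim

theorem mem_of_isDiPath {p : List N.V} {u v x : N.V} (hp : N.IsDiPath p u v)
    (hux : ReflTransGen N.arc u x) (hxv : ReflTransGen N.arc x v) : x ∈ p := by
  induction p generalizing u with
  | nil => simp [IsDiPath] at hp
  | cons a q ih =>
    obtain rfl := hp.head_eq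
    rcases hux.cases_head with rfl | ⟨y, huy, hyx⟩
    · exact List.mem_cons_self
    cases q with
    | nil =>
      obtain rfl := hp.eq_of_singleton
      exact (hacyc a (TransGen.head' huy (hyx.trans hxv))).elim
    | cons t q =>
      obtain ⟨hat, htail⟩ := hp.of_cons_cons
      obtain rfl : y = t := by
        by_contra hne
        exact not_reflTransGen_of_siblings htree hacyc huy hat hne (hyx.trans hxv)
          (htail.reflTransGen_of_mem List.mem_cons_self).2
      exact List.mem_cons_of_mem _ (ih htail hyx)

end IsTree

/-- The paths of `Net.Consistent`, with a meeting condition stronger than disjointness of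
interiors: two paths sharing an arc have disjoint interiors, but their images under a
subdivision of that arc do not. -/
structure TripletPaths (N : Net X) (a b c : X) (v w : N.V) (p₁ p₂ p₃ p₄ : List N.V) :
    Prop where
  isDiPath₁ : N.IsDiPath p₁ v (N.leaf c)
  isDiPath₂ : N.IsDiPath p₂ v w
  isDiPath₃ : N.IsDiPath p₃ w (N.leaf a)
  isDiPath₄ : N.IsDiPath p₄ w (N.leaf b)
  meet₁₂ : MeetAtMost p₁ p₂ v
  meet₁₃ : MeetAtMost p₁ p₃ v
  meet₁₄ : MeetAtMost p₁ p₄ v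
  meet₂₃ : MeetAtMost p₂ p₃ w
  meet₂₄ : MeetAtMost p₂ p₄ w
  meet₃₄ : MeetAtMost p₃ p₄ w

theorem TripletPaths.consistent {a b c : X} {v w : N.V} {p₁ p₂ p₃ p₄ : List N.V}
    (h : N.TripletPaths a b c v w p₁ p₂ p₃ p₄) (hab : a ≠ b) (hac : a ≠ c) (hbc : b ≠ c)
    (hvw : v ≠ w) : N.Consistent a b c := by
  refine ⟨hab, hac, hbc, v, w, hvw, p₁, p₂, p₃, p₄, h.isDiPath₁, h.isDiPath₂, h.isDiPath₃,
    h.isDiPath₄, ?_⟩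
  simp only [List.pairwise_cons, List.mem_cons, forall_eq_or_imp,
    List.not_mem_nil, List.Pairwise.nil, IsEmpty.forall_iff, implies_true, and_true]
  exact ⟨⟨h.isDiPath₁.listInterior_disjoint h.meet₁₂ (.inl rfl),
      h.isDiPath₁.listInterior_disjoint h.meet₁₃ (.inl rfl),
      h.isDiPath₁.listInterior_disjoint h.meet₁₄ (.inl rfl)⟩,
    ⟨h.isDiPath₂.listInterior_disjoint h.meet₂₃ (.inr rfl),
      h.isDiPath₂.listInterior_disjoint h.meet₂₄ (.inr rfl)⟩,
    h.isDiPath₃.listInterior_disjoint h.meet₃₄ (.inl rfl)⟩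

theorem IsPhylo.exists_tripletPaths (hphy : N.IsPhylo) (htree : N.IsTree) {a b c : X}
    (hab : a ≠ b) {u : N.V} (ha : a ∈ N.cluster u) (hb : b ∈ N.cluster u)
    (hc : c ∉ N.cluster u) :
    ∃ v w p₁ p₂ p₃ p₄, v ≠ w ∧ N.TripletPaths a b c v w p₁ p₂ p₃ p₄ := by
  have hacyc := hphy.acyclic_s19
  obtain ⟨w, ya, yb, huw, hwya, hwyb, hyab, hya, hyb⟩ := exists_fork hacyc ha hb
    (fun h => hab (hphy.eq_of_reflTransGen_leaf_leaf h))
    (fun h => hab (hphy.eq_of_reflTransGen_leaf_leaf h).symm)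
  have hwc : ¬ ReflTransGen N.arc w (N.leaf c) := fun h => hc (huw.trans h)
  obtain ⟨ρ, hρ⟩ := hphy.exists_root
  obtain ⟨v, yw, yc, -, hvyw, hvyc, hywc, hyw, hyc⟩ := exists_fork hacyc (hρ w) (hρ (N.leaf c))
    hwc (fun h => hwc (hphy.eq_of_reflTransGen_leaf h ▸ .refl))
  obtain ⟨p₁, hp₁, hmem₁⟩ := exists_isDiPath_of_arc hacyc hvyc hyc
  obtain ⟨p₂, hp₂, hmem₂⟩ := exists_isDiPath_of_arc hacyc hvyw hyw
  obtain ⟨p₃, hp₃, hmem₃⟩ := exists_isDiPath_of_arc hacyc hwya hya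
  obtain ⟨p₄, hp₄, hmem₄⟩ := exists_isDiPath_of_arc hacyc hwyb hyb
  have below_yw : ∀ p x, N.IsDiPath p w x → ∀ z ∈ p, z = v ∨ ReflTransGen N.arc yw z :=
    fun p x hp z hz => .inr (hyw.trans (hp.reflTransGen_of_mem hz).1)
  refine ⟨v, w, p₁, p₂, p₃, p₄, fun h => hacyc v (TransGen.head' hvyw (h ▸ hyw)),
    hp₁, hp₂, hp₃, hp₄, ?_, ?_, ?_, meetAtMost_of_isDiPath hacyc hp₂ hp₃,
    meetAtMost_of_isDiPath hacyc hp₂ hp₄, ?_⟩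
  · exact htree.meetAtMost_of_siblings hacyc hvyc hvyw hywc.symm hmem₁ hmem₂
  · exact htree.meetAtMost_of_siblings hacyc hvyc hvyw hywc.symm hmem₁ (below_yw _ _ hp₃)
  · exact htree.meetAtMost_of_siblings hacyc hvyc hvyw hywc.symm hmem₁ (below_yw _ _ hp₄)
  · exact htree.meetAtMost_of_siblings hacyc hwya hwyb hyab hmem₃ hmem₄

theorem IsPhylo.mem_listInterior_of_reflTransGen_leaf (hphy : N.IsPhylo) {p : List N.V}
    {u s : N.V} {x y : X} (hp : N.IsDiPath p u (N.leaf x)) (hs : s ∈ p) (hsu : s ≠ u)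
    (hsy : ReflTransGen N.arc s (N.leaf y)) (hxy : x ≠ y) : s ∈ listInterior p :=
  hp.mem_listInterior_iff.2 ⟨hs, hsu, fun h => hxy (hphy.eq_of_reflTransGen_leaf_leaf (h ▸ hsy))⟩

/-- Without the degree bound this fails: a vertex with a parent and children `a`, `b`, `c`
makes `ab|c` consistent. -/
theorem IsPhylo.exists_cluster_of_consistent (hphy : N.IsPhylo) (htree : N.IsTree)
    (hdeg : ∀ v, N.outdeg v ≤ 2) {a b c : X} (h : N.Consistent a b c) :
    ∃ w, a ∈ N.cluster w ∧ b ∈ N.cluster w ∧ c ∉ N.cluster w := by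
  obtain ⟨hab, hac, hbc, v, w, -, p₁, p₂, p₃, p₄, hp₁, hp₂, hp₃, hp₄, hdisj⟩ := h
  simp only [List.pairwise_cons, List.mem_cons, forall_eq_or_imp, List.not_mem_nil,
    List.Pairwise.nil, IsEmpty.forall_iff, implies_true, and_true] at hdisj
  obtain ⟨⟨-, hd₁₃, hd₁₄⟩, -, hd₃₄⟩ := hdisj
  have hacyc := hphy.acyclic_s19
  have hwa := (hp₃.reflTransGen_of_mem hp₃.head_mem).2
  have hwb := (hp₄.reflTransGen_of_mem hp₄.head_mem).2
  refine ⟨w, hwa, hwb, fun hwc => ?_⟩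
  have hw_ne : ∀ {x y : X}, x ≠ y → ReflTransGen N.arc w (N.leaf y) → w ≠ N.leaf x :=
    fun hxy hwy hw => hxy (hphy.eq_of_reflTransGen_leaf_leaf (hw ▸ hwy))
  obtain ⟨ya, hya₃, hwya, hya_w⟩ := hp₃.exists_arc_mem (hw_ne hab hwb)
  obtain ⟨yb, hyb₄, hwyb, hyb_w⟩ := hp₄.exists_arc_mem (hw_ne hab.symm hwa)
  obtain ⟨yc, hwyc, hyc⟩ := hwc.cases_head.resolve_left (hw_ne hac.symm hwa)
  have hya := (hp₃.reflTransGen_of_mem hya₃).2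
  have hyb := (hp₄.reflTransGen_of_mem hyb₄).2
  have hvw := (hp₂.reflTransGen_of_mem hp₂.head_mem).2
  have hyc₁ := htree.mem_of_isDiPath hacyc hp₁ (hvw.tail hwyc) hyc
  have hyc_v : yc ≠ v := fun h => hacyc v (TransGen.tail' hvw (h ▸ hwyc))
  rcases eq_or_eq_of_outdeg_le_two (hdeg w) hwya hwyb hwyc with rfl | rfl | rfl
  · exact hd₃₄ ya (hphy.mem_listInterior_of_reflTransGen_leaf hp₃ hya₃ hya_w hyb hab)
      (hphy.mem_listInterior_of_reflTransGen_leaf hp₄ hyb₄ hyb_w hya hab.symm)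
  · exact hd₁₃ ya (hphy.mem_listInterior_of_reflTransGen_leaf hp₁ hyc₁ hyc_v hya hac.symm)
      (hphy.mem_listInterior_of_reflTransGen_leaf hp₃ hya₃ hya_w hyc hac)
  · exact hd₁₄ yb (hphy.mem_listInterior_of_reflTransGen_leaf hp₁ hyc₁ hyc_v hyb hbc.symm)
      (hphy.mem_listInterior_of_reflTransGen_leaf hp₄ hyb₄ hyb_w hyc hbc)

structure DisplaysVia (N T : Net X) (φ : T.V → N.V) (P : T.V → T.V → List N.V) : Prop where
  injective : Function.Injective φ
  map_leaf : ∀ x, φ (T.leaf x) = N.leaf x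
  isDiPath : ∀ u v, T.arc u v → N.IsDiPath (P u v) (φ u) (φ v)
  ne_of_mem_listInterior : ∀ u v, T.arc u v → ∀ w ∈ listInterior (P u v), ∀ z, φ z ≠ w
  listInterior_disjoint : ∀ u v u' v', T.arc u v → T.arc u' v' → (u, v) ≠ (u', v') →
    ∀ w ∈ listInterior (P u v), w ∉ listInterior (P u' v')

theorem Displays.exists_displaysVia (h : N.Displays T) : ∃ φ P, N.DisplaysVia T φ P :=
  let ⟨φ, P, h₁, h₂, h₃, h₄, h₅⟩ := h
  ⟨φ, P, h₁, h₂, h₃, h₄, h₅⟩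

/-- `x` is a vertex of the image of the path `p` of `T` in the subdivision given by `φ`, `P`. -/
def LiesOver (T : Net X) {β : Type*} (φ : T.V → β) (P : T.V → T.V → List β)
    (p : List T.V) (x : β) : Prop :=
  (∃ t ∈ p, φ t = x) ∨ ∃ s ∈ p, ∃ s' ∈ p, T.arc s s' ∧ x ∈ listInterior (P s s')

namespace DisplaysVia

variable {φ : T.V → N.V} {P : T.V → T.V → List N.V} (hd : N.DisplaysVia T φ P)
include hd

/-- The first arcs of the paths `P v y` for the children `y` of `v` are pairwise distinct. -/
theorem outdeg_le (hirr : ∀ v, ¬ T.arc v v) (v : T.V) : T.outdeg v ≤ N.outdeg (φ v) := by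
  have first : ∀ y, ∃ s, T.arc v y →
      N.arc (φ v) s ∧ (s = φ y ∨ s ∈ listInterior (P v y)) := by
    intro y
    by_cases hy : T.arc v y
    · have hp := hd.isDiPath v y hy
      obtain ⟨s, hs, harc, hsv⟩ :=
        hp.exists_arc_mem fun h => hirr v (hd.injective h ▸ hy)
      refine ⟨s, fun _ => ⟨harc, ?_⟩⟩
      by_cases hsy : s = φ y
      · exact .inl hsy
      · exact .inr (hp.mem_listInterior_iff.2 ⟨hs, hsv, hsy⟩)
    · exact ⟨φ v, fun h => absurd h hy⟩
  choose f hf using first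
  refine Set.ncard_le_ncard_of_injOn f (fun y hy => (hf y hy).1) (fun y hy y' hy' he => ?_)
  by_contra hne
  rcases (hf y hy).2 with h | h <;> rcases (hf y' hy').2 with h' | h'
  · exact hne (hd.injective (h.symm.trans (he.trans h')))
  · exact hd.ne_of_mem_listInterior v y' hy' _ h' y (h.symm.trans he)
  · exact hd.ne_of_mem_listInterior v y hy _ h y' (h'.symm.trans he.symm)
  · exact hd.listInterior_disjoint v y v y' hy hy' (by simpa using hne) _ h (he ▸ h')

theorem exists_isDiPath_liesOver (hacyc : ∀ v, ¬ TransGen N.arc v v) {p : List T.V} {u v : T.V}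
    (hp : T.IsDiPath p u v) :
    ∃ q, N.IsDiPath q (φ u) (φ v) ∧ ∀ x ∈ q, T.LiesOver φ P p x := by
  induction p generalizing u with
  | nil => simp [IsDiPath] at hp
  | cons a r ih =>
    obtain rfl := hp.head_eq
    cases r with
    | nil =>
      obtain rfl := hp.eq_of_singleton
      refine ⟨[φ a], .singleton _, fun x hx => .inl ⟨a, List.mem_cons_self, ?_⟩⟩
      exact (List.mem_singleton.1 hx).symm
    | cons t r =>
      obtain ⟨hat, htail⟩ := hp.of_cons_cons
      obtain ⟨q, hq, hqlies⟩ := ih htail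
      have hP := hd.isDiPath a t hat
      refine ⟨P a t ++ q.tail, hP.append hacyc hq, fun x hx => ?_⟩
      rcases List.mem_append.1 hx with hx | hx
      · by_cases hxa : x = φ a
        · exact .inl ⟨a, List.mem_cons_self, hxa.symm⟩
        by_cases hxt : x = φ t
        · exact .inl ⟨t, by simp, hxt.symm⟩
        exact .inr ⟨a, List.mem_cons_self, t, by simp, hat,
          hP.mem_listInterior_iff.2 ⟨hx, hxa, hxt⟩⟩
      · rcases hqlies x (List.mem_of_mem_tail hx) with ⟨s, hs, rfl⟩ | ⟨s, hs, s', hs', h⟩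
        · exact .inl ⟨s, List.mem_cons_of_mem _ hs, rfl⟩
        · exact .inr ⟨s, List.mem_cons_of_mem _ hs, s', List.mem_cons_of_mem _ hs', h⟩

theorem meetAtMost (hirr : ∀ v, ¬ T.arc v v) {p q : List T.V} {p' q' : List N.V} {e : T.V}
    (hpq : MeetAtMost p q e) (hp' : ∀ x ∈ p', T.LiesOver φ P p x)
    (hq' : ∀ x ∈ q', T.LiesOver φ P q x) : MeetAtMost p' q' (φ e) := by
  intro x hxp hxq
  rcases hp' x hxp with ⟨t, ht, rfl⟩ | ⟨s, hs, s', hs', hss', hx⟩ <;>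
    rcases hq' _ hxq with ⟨t', ht', he⟩ | ⟨r, hr, r', hr', hrr', hx'⟩
  · rw [hpq t ht (hd.injective he ▸ ht')]
  · exact (hd.ne_of_mem_listInterior r r' hrr' _ hx' t rfl).elim
  · exact (hd.ne_of_mem_listInterior s s' hss' _ hx t' he).elim
  · by_cases hsr : (s, s') = (r, r')
    · obtain ⟨rfl, rfl⟩ := Prod.mk.inj hsr
      obtain rfl := hpq s hs hr
      obtain rfl := hpq s' hs' hr'
      exact (hirr _ hss').elim
    · exact (hd.listInterior_disjoint s s' r r' hss' hrr' hsr x hx hx').elim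

theorem exists_tripletPaths (hacyc : ∀ v, ¬ TransGen N.arc v v) (hirr : ∀ v, ¬ T.arc v v)
    {a b c : X} {v w : T.V} {p₁ p₂ p₃ p₄ : List T.V}
    (h : T.TripletPaths a b c v w p₁ p₂ p₃ p₄) :
    ∃ q₁ q₂ q₃ q₄, N.TripletPaths a b c (φ v) (φ w) q₁ q₂ q₃ q₄ := by
  obtain ⟨q₁, hq₁, hl₁⟩ := hd.exists_isDiPath_liesOver hacyc h.isDiPath₁
  obtain ⟨q₂, hq₂, hl₂⟩ := hd.exists_isDiPath_liesOver hacyc h.isDiPath₂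
  obtain ⟨q₃, hq₃, hl₃⟩ := hd.exists_isDiPath_liesOver hacyc h.isDiPath₃
  obtain ⟨q₄, hq₄, hl₄⟩ := hd.exists_isDiPath_liesOver hacyc h.isDiPath₄
  simp only [hd.map_leaf] at hq₁ hq₃ hq₄
  exact ⟨q₁, q₂, q₃, q₄, hq₁, hq₂, hq₃, hq₄,
    hd.meetAtMost hirr h.meet₁₂ hl₁ hl₂, hd.meetAtMost hirr h.meet₁₃ hl₁ hl₃,
    hd.meetAtMost hirr h.meet₁₄ hl₁ hl₄, hd.meetAtMost hirr h.meet₂₃ hl₂ hl₃,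
    hd.meetAtMost hirr h.meet₂₄ hl₂ hl₄, hd.meetAtMost hirr h.meet₃₄ hl₃ hl₄⟩

end DisplaysVia

end Net

/-- if every tree in a collection `TT` of phylogenetic trees on `X` is
displayed by the binary level-1 network `N`, the softwired cluster system of the binary
level-1 network `N'` contains the union of the cluster systems of the trees in `TT`,
and `R(N)` equals the union of the triplet systems of the trees in `TT`, then
`R(N) ⊆ R(N')`. -/
theorem stmt19 {X : Type} (N N' : Net X)
    (hlev : N.IsLevel1) (hlev' : N'.IsLevel1)
    (TT : Net X → Prop)
    (htrees : ∀ T, TT T → T.IsPhylo ∧ T.IsTree ∧ N.Displays T)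
    (hclus : ∀ T, TT T → T.clusterSystem ⊆ N'.softwired)
    (htrip : ∀ a b c : X, N.Consistent a b c ↔ ∃ T, TT T ∧ T.Consistent a b c) :
    N.tripletSet ⊆ N'.tripletSet := by
  rintro ⟨ab, c⟩ ⟨a, b, hab_eq, hcons⟩
  obtain ⟨T, hTT, hT⟩ := (htrip a b c).1 hcons
  obtain ⟨hab, hac, hbc, -⟩ := hcons
  obtain ⟨hphy, htree, hdisp⟩ := htrees T hTT
  obtain ⟨φ, P, hφ⟩ := hdisp.exists_displaysVia
  have hdeg v := (hφ.outdeg_le hphy.irrefl v).trans (hlev.1.outdeg_le_two _)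
  obtain ⟨w, hwa, hwb, hwc⟩ := hphy.exists_cluster_of_consistent htree hdeg hT
  obtain ⟨T', hphy', htree', hdisp', u, hu⟩ := hclus T hTT ⟨w, rfl⟩
  rw [hu] at hwa hwb hwc
  obtain ⟨v, w', p₁, p₂, p₃, p₄, hvw, hpaths⟩ :=
    hphy'.exists_tripletPaths htree' hab hwa hwb hwc
  obtain ⟨φ', P', hφ'⟩ := hdisp'.exists_displaysVia
  obtain ⟨q₁, q₂, q₃, q₄, hq⟩ := hφ'.exists_tripletPaths hlev'.1.1.acyclic_s19 hphy'.irrefl hpaths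
  exact ⟨a, b, hab_eq, hq.consistent hab hac hbc (hφ'.injective.ne hvw)⟩
end
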